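/- arXiv:1503.00998 — 9 statements merged into one kernel-verified Lean document; each statement's English description precedes it below -/
import Mathlib

section
/- If G is an r-regular graph on n vertices (r ≥ 1), then the number of dominating sets of G is at most (2^(r+1) - 1)^(n/(r+1)). -/
/-!
Shearer's lemma: if every point lies in at least `k` of the sets `A i`, then a family of finite
sets `𝒜` satisfies `#𝒜 ^ k ≤ ∏ i, #(𝒜.image (· ∩ A i))`. In an `r`-regular graph every vertex lies
in exactly `r + 1` closed neighbourhoods `N[v]`, and a dominating set meets every `N[v]`, so its
trace on `N[v]` is one of the `2 ^ (r + 1) - 1` nonempty subsets of `N[v]`.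

Shearer's lemma goes by induction on the ground set. Splitting `𝒜` at a point `a` into the sets
avoiding `a` and the sets containing it (with `a` removed), the traces on the `A i` containing `a`
add up, and the two inductive bounds combine via `(a + b) ^ (k / t) ≤ a ^ (k / t) + b ^ (k / t)`
(`k ≤ t`) and the superadditivity of the geometric mean, which follows from AM-GM.
-/

open Finset NNReal

namespace NNReal

variable {ι : Type*} {s : Finset ι}

lemma prod_rpow_inv_card_le_sum_div_mul {f c : ι → ℝ≥0} (hs : s.Nonempty)
    (hfc : ∀ i ∈ s, c i = 0 → f i = 0) :
    (∏ i ∈ s, f i) ^ (#s : ℝ)⁻¹ ≤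
      (∑ i ∈ s, (#s : ℝ≥0)⁻¹ * (f i / c i)) * (∏ i ∈ s, c i) ^ (#s : ℝ)⁻¹ := by
  have hf : ∏ i ∈ s, f i = (∏ i ∈ s, f i / c i) * ∏ i ∈ s, c i := by
    rw [← prod_mul_distrib]
    exact prod_congr rfl fun i hi ↦ (div_mul_cancel_of_imp (hfc i hi)).symm
  rw [hf, mul_rpow, ← finsetProd_rpow]
  gcongr
  convert geom_mean_le_arith_mean_weighted s (fun _ ↦ (#s : ℝ≥0)⁻¹) (fun i ↦ f i / c i) ?_
  · simp
  · simp [hs.card_ne_zero]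

lemma geom_mean_add_geom_mean_le (hs : s.Nonempty) (f g : ι → ℝ≥0) :
    (∏ i ∈ s, f i) ^ (#s : ℝ)⁻¹ + (∏ i ∈ s, g i) ^ (#s : ℝ)⁻¹ ≤
      (∏ i ∈ s, (f i + g i)) ^ (#s : ℝ)⁻¹ := by
  have hf := prod_rpow_inv_card_le_sum_div_mul (f := f) (c := f + g) hs
    fun i _ h ↦ (add_eq_zero.1 h).1
  have hg := prod_rpow_inv_card_le_sum_div_mul (f := g) (c := f + g) hs
    fun i _ h ↦ (add_eq_zero.1 h).2
  have hweights : ∑ i ∈ s, (#s : ℝ≥0)⁻¹ * (f i / (f i + g i)) +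
      ∑ i ∈ s, (#s : ℝ≥0)⁻¹ * (g i / (f i + g i)) ≤ 1 := calc
    _ = ∑ i ∈ s, (#s : ℝ≥0)⁻¹ * ((f i + g i) / (f i + g i)) := by
      simp only [← sum_add_distrib, ← mul_add, add_div]
    _ ≤ ∑ _i ∈ s, (#s : ℝ≥0)⁻¹ :=
      sum_le_sum fun i _ ↦ mul_le_of_le_one_right' (div_self_le_one _)
    _ = 1 := by simp [hs.card_ne_zero]
  calc _ ≤ _ := add_le_add hf hg
    _ ≤ (∏ i ∈ s, (f i + g i)) ^ (#s : ℝ)⁻¹ := by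
      rw [← add_mul]; exact mul_le_of_le_one_left' hweights

lemma add_pow_le_prod_add_mul {k : ℕ} (hk : 0 < k) (hks : k ≤ #s) {a b M : ℝ≥0}
    {f g : ι → ℝ≥0} (ha : a ^ k ≤ (∏ i ∈ s, f i) * M) (hb : b ^ k ≤ (∏ i ∈ s, g i) * M) :
    (a + b) ^ k ≤ (∏ i ∈ s, (f i + g i)) * M := by
  have hs : s.Nonempty := card_pos.1 (hk.trans_le hks)
  have ht : (0 : ℝ) < (#s : ℝ)⁻¹ := by simp [hs.card_pos]
  have hroot : ∀ x : ℝ≥0, (x ^ k) ^ (#s : ℝ)⁻¹ = x ^ ((k : ℝ) * (#s : ℝ)⁻¹) := fun x ↦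
    (rpow_natCast_mul x k _).symm
  have hexp : (k : ℝ) * (#s : ℝ)⁻¹ ≤ 1 := by
    rw [← div_eq_mul_inv, div_le_one (by exact_mod_cast hs.card_pos)]; exact_mod_cast hks
  rw [← rpow_le_rpow_iff ht]
  calc ((a + b) ^ k) ^ (#s : ℝ)⁻¹
      ≤ (a ^ k) ^ (#s : ℝ)⁻¹ + (b ^ k) ^ (#s : ℝ)⁻¹ := by
        simp only [hroot]; exact rpow_add_le_add_rpow a b (by positivity) hexp
    _ ≤ ((∏ i ∈ s, f i) * M) ^ (#s : ℝ)⁻¹ + ((∏ i ∈ s, g i) * M) ^ (#s : ℝ)⁻¹ := by gcongr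
    _ ≤ ((∏ i ∈ s, (f i + g i)) * M) ^ (#s : ℝ)⁻¹ := by
        simp only [mul_rpow, ← add_mul]; gcongr; exact geom_mean_add_geom_mean_le hs f g

end NNReal

namespace Finset

variable {α : Type*} [DecidableEq α] {𝒜 : Finset (Finset α)} {B : Finset α} {a : α}

lemma nonMemberSubfamily_image_inter (ha : a ∈ B) :
    (𝒜.image (· ∩ B)).nonMemberSubfamily a = (𝒜.nonMemberSubfamily a).image (· ∩ B) := by
  simp only [nonMemberSubfamily, filter_image, mem_inter, ha, and_true]

lemma memberSubfamily_image_inter (ha : a ∈ B) :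
    (𝒜.image (· ∩ B)).memberSubfamily a = (𝒜.memberSubfamily a).image (· ∩ B) := by
  simp only [memberSubfamily, filter_image, image_image, Function.comp_def, mem_inter, ha,
    and_true, erase_inter]

lemma card_image_inter_memberSubfamily_add_card_image_inter_nonMemberSubfamily (ha : a ∈ B) :
    #((𝒜.memberSubfamily a).image (· ∩ B)) + #((𝒜.nonMemberSubfamily a).image (· ∩ B)) =
      #(𝒜.image (· ∩ B)) := by
  rw [← memberSubfamily_image_inter ha, ← nonMemberSubfamily_image_inter ha,
    card_memberSubfamily_add_card_nonMemberSubfamily]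

lemma image_inter_memberSubfamily_subset (ha : a ∉ B) :
    (𝒜.memberSubfamily a).image (· ∩ B) ⊆ 𝒜.image (· ∩ B) := by
  have h (s : Finset α) : s.erase a ∩ B = s ∩ B := by
    rw [erase_inter, erase_eq_of_notMem fun h ↦ ha (mem_inter.1 h).2]
  simp only [memberSubfamily, image_image, Function.comp_def, h]
  exact image_subset_image (filter_subset _ _)

lemma image_inter_nonMemberSubfamily_subset :
    (𝒜.nonMemberSubfamily a).image (· ∩ B) ⊆ 𝒜.image (· ∩ B) :=
  image_subset_image (filter_subset _ _)

theorem card_pow_le_prod_card_image_inter {ι : Type*} (𝒜 : Finset (Finset α)) (I : Finset ι)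
    (A : ι → Finset α) {k : ℕ} (hk : 0 < k) (hcover : ∀ x, k ≤ #{i ∈ I | x ∈ A i}) :
    #𝒜 ^ k ≤ ∏ i ∈ I, #(𝒜.image (· ∩ A i)) := by
  induction 𝒜 using memberFamily_induction_on with
  | empty => simp [hk.ne']
  | singleton_empty => simp
  | @subfamily a 𝒜 ih₀ ih₁ =>
    have hbound (𝒞 : Finset (Finset α))
        (h𝒞 : ∀ i ∈ I, a ∉ A i → #(𝒞.image (· ∩ A i)) ≤ #(𝒜.image (· ∩ A i)))
        (ih : #𝒞 ^ k ≤ ∏ i ∈ I, #(𝒞.image (· ∩ A i))) :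
        (#𝒞 : NNReal) ^ k ≤ (∏ i ∈ I with a ∈ A i, (#(𝒞.image (· ∩ A i)) : NNReal)) *
          ∏ i ∈ I with a ∉ A i, (#(𝒜.image (· ∩ A i)) : NNReal) := calc
      (#𝒞 : NNReal) ^ k ≤ ∏ i ∈ I, (#(𝒞.image (· ∩ A i)) : NNReal) := mod_cast ih
      _ = (∏ i ∈ I with a ∈ A i, (#(𝒞.image (· ∩ A i)) : NNReal)) *
          ∏ i ∈ I with a ∉ A i, (#(𝒞.image (· ∩ A i)) : NNReal) :=
        (prod_filter_mul_prod_filter_not I _ _).symm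
      _ ≤ _ := by
        refine mul_le_mul_right (prod_le_prod' fun i hi ↦ ?_) _
        rw [mem_filter] at hi
        exact_mod_cast h𝒞 i hi.1 hi.2
    have hstep := NNReal.add_pow_le_prod_add_mul hk (hcover a)
      (hbound _ (fun i _ ha ↦ card_le_card (image_inter_memberSubfamily_subset ha)) ih₁)
      (hbound _ (fun i _ _ ↦ card_le_card image_inter_nonMemberSubfamily_subset) ih₀)
    have htrace : ∏ i ∈ I with a ∈ A i, ((#((𝒜.memberSubfamily a).image (· ∩ A i)) : NNReal) +
        #((𝒜.nonMemberSubfamily a).image (· ∩ A i))) =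
        ∏ i ∈ I with a ∈ A i, (#(𝒜.image (· ∩ A i)) : NNReal) :=
      prod_congr rfl fun i hi ↦ mod_cast
        card_image_inter_memberSubfamily_add_card_image_inter_nonMemberSubfamily (mem_filter.1 hi).2
    rw [htrace] at hstep
    rw [← card_memberSubfamily_add_card_nonMemberSubfamily a 𝒜,
      ← prod_filter_mul_prod_filter_not I (fun i ↦ a ∈ A i)]
    exact_mod_cast hstep

end Finset

namespace SimpleGraph

variable {V : Type*} (G : SimpleGraph V)

def IsDominating (S : Finset V) : Prop := ∀ v, ∃ u ∈ S, u = v ∨ G.Adj u v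

variable [Fintype V] [DecidableRel G.Adj]

section closedNeighborFinset

variable [DecidableEq V]

def closedNeighborFinset (v : V) : Finset V := insert v (G.neighborFinset v)

variable {G}

@[simp]
lemma mem_closedNeighborFinset {u v : V} : u ∈ G.closedNeighborFinset v ↔ u = v ∨ G.Adj u v := by
  simp [closedNeighborFinset, adj_comm]

lemma card_closedNeighborFinset (v : V) : #(G.closedNeighborFinset v) = G.degree v + 1 :=
  card_insert_of_notMem (by simp)

lemma filter_mem_closedNeighborFinset (u : V) :
    ({v | u ∈ G.closedNeighborFinset v} : Finset V) = G.closedNeighborFinset u := by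
  ext v
  simp [eq_comm, adj_comm]

lemma IsDominating.inter_closedNeighborFinset_nonempty {S : Finset V} (hS : G.IsDominating S)
    (v : V) : (S ∩ G.closedNeighborFinset v).Nonempty := by
  obtain ⟨u, hu, huv⟩ := hS v
  exact ⟨u, mem_inter.2 ⟨hu, mem_closedNeighborFinset.2 huv⟩⟩

lemma card_image_inter_closedNeighborFinset_le {𝒟 : Finset (Finset V)}
    (h𝒟 : ∀ S ∈ 𝒟, G.IsDominating S) (v : V) :
    #(𝒟.image (· ∩ G.closedNeighborFinset v)) ≤ 2 ^ (G.degree v + 1) - 1 := by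
  calc #(𝒟.image (· ∩ G.closedNeighborFinset v))
      ≤ #((G.closedNeighborFinset v).powerset.erase ∅) := by
        refine card_le_card (image_subset_iff.2 fun S hS ↦ mem_erase.2 ⟨?_, ?_⟩)
        · exact ((h𝒟 S hS).inter_closedNeighborFinset_nonempty v).ne_empty
        · exact mem_powerset.2 inter_subset_right
    _ = 2 ^ (G.degree v + 1) - 1 := by
        rw [card_erase_of_mem (empty_mem_powerset _), card_powerset, card_closedNeighborFinset]

end closedNeighborFinset

variable {G} in
theorem ncard_isDominating_pow_le_prod {k : ℕ} (hk : 0 < k) (hdeg : ∀ v, k ≤ G.degree v + 1) :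
    {S : Finset V | G.IsDominating S}.ncard ^ k ≤ ∏ v, (2 ^ (G.degree v + 1) - 1) := by
  classical
  rw [← coe_filter_univ, Set.ncard_coe_finset]
  refine (card_pow_le_prod_card_image_inter _ univ G.closedNeighborFinset hk fun u ↦ ?_).trans
    (prod_le_prod' fun v _ ↦
      card_image_inter_closedNeighborFinset_le (fun S hS ↦ (mem_filter.1 hS).2) v)
  rw [filter_mem_closedNeighborFinset, card_closedNeighborFinset]
  exact hdeg u

end SimpleGraph

lemma Real.le_rpow_div_of_pow_le {x c : ℝ} {n k : ℕ} (hx : 0 ≤ x) (hc : 0 ≤ c) (hk : k ≠ 0)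
    (h : x ^ k ≤ c ^ n) : x ≤ c ^ ((n : ℝ) / k) := calc
  x = (x ^ k) ^ (k⁻¹ : ℝ) := (Real.pow_rpow_inv_natCast hx hk).symm
  _ ≤ (c ^ n) ^ (k⁻¹ : ℝ) := by gcongr
  _ = c ^ ((n : ℝ) / k) := by rw [← Real.rpow_natCast, ← Real.rpow_mul hc, div_eq_mul_inv]

theorem stmt0_general {V : Type*} [Fintype V] (G : SimpleGraph V) [DecidableRel G.Adj] (r : ℕ)
    (hreg : G.IsRegularOfDegree r) :
    ({S : Finset V | ∀ v : V, ∃ u ∈ S, u = v ∨ G.Adj u v}.ncard : ℝ) ≤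
      ((2 : ℝ) ^ (r + 1) - 1) ^ ((Fintype.card V : ℝ) / (r + 1)) := by
  have hcount := G.ncard_isDominating_pow_le_prod (k := r + 1) r.succ_pos fun v ↦ by rw [hreg v]
  simp only [hreg _, prod_const, card_univ] at hcount
  have hcast : (((2 ^ (r + 1) - 1 : ℕ)) : ℝ) = 2 ^ (r + 1) - 1 := by
    push_cast [Nat.one_le_two_pow]; rfl
  have := Real.le_rpow_div_of_pow_le (x := {S : Finset V | G.IsDominating S}.ncard)
    (c := (2 ^ (r + 1) - 1 : ℕ)) (by positivity) (by positivity) r.succ_ne_zero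
    (by exact_mod_cast hcount)
  rwa [hcast, Nat.cast_succ] at this

/-- If `G` is an `r`-regular graph on `n` vertices (`r ≥ 1`), then the number of
dominating sets of `G` is at most `(2^(r+1) - 1)^(n/(r+1))`. -/
theorem stmt0 {V : Type*} [Fintype V] (G : SimpleGraph V) [DecidableRel G.Adj] (r : ℕ) (hr : 1 ≤ r)
    (hreg : G.IsRegularOfDegree r) :
    ({S : Finset V | ∀ v : V, ∃ u ∈ S, u = v ∨ G.Adj u v}.ncard : ℝ) ≤
      ((2 : ℝ) ^ (r + 1) - 1) ^ ((Fintype.card V : ℝ) / (r + 1)) :=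
  stmt0_general G r hreg
end

section
/- If G is an r-regular graph on n vertices and 𝓛 is a coloring condition over a finite color set K, then the number of 𝓛-legal closed neighborhood colorings of G is at most N(r+1,𝓛)^(n/(r+1)). -/
open Finset

attribute [local instance] Classical.propDecidable

section ShearerAux

variable {V K : Type*} [DecidableEq V]

/-- projection of a family of functions onto a coordinate set -/
noncomputable def pproj (A : Finset V) (F : Finset (V → K)) : Finset (V → Option K) :=
  F.image (fun f v => if v ∈ A then some (f v) else none)

lemma pproj_mono {A : Finset V} {F F' : Finset (V → K)} (h : F ⊆ F') :
    pproj A F ⊆ pproj A F' := Finset.image_subset_image h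

lemma pproj_erase (A : Finset V) (x : V) (F : Finset (V → K)) :
    pproj (A.erase x) F = (pproj A F).image (fun g v => if v = x then none else g v) := by
  unfold pproj
  rw [Finset.image_image]
  apply Finset.image_congr
  intro f _
  funext v
  simp only [Function.comp]
  by_cases hv : v = x
  · subst hv; simp
  · simp [hv, Finset.mem_erase]

lemma card_pproj_erase_le (A : Finset V) (x : V) (F : Finset (V → K)) :
    (pproj (A.erase x) F).card ≤ (pproj A F).card := by
  rw [pproj_erase]; exact Finset.card_image_le

lemma card_fiber [DecidableEq K] (A : Finset V) {x : V} (hx : x ∈ A) (F : Finset (V → K))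
    (a : K) :
    ((pproj A F).filter (fun g => g x = some a)).card
      = (pproj (A.erase x) (F.filter (fun f => f x = a))).card := by
  apply Finset.card_bij (fun g _ => fun v => if v = x then none else g v)
  · rintro g hg
    rw [Finset.mem_filter] at hg
    obtain ⟨hg, hgx⟩ := hg
    simp only [pproj, Finset.mem_image] at hg ⊢
    obtain ⟨f, hf, rfl⟩ := hg
    have hfx : f x = a := by
      simp only [if_pos hx] at hgx
      exact Option.some_injective _ hgx
    refine ⟨f, ?_, ?_⟩
    · rw [Finset.mem_filter]; exact ⟨hf, hfx⟩
    · funext v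
      by_cases hv : v = x
      · subst hv; simp
      · simp [hv, Finset.mem_erase]
  · rintro g hg g' hg' he
    rw [Finset.mem_filter] at hg hg'
    funext v
    by_cases hv : v = x
    · subst hv; rw [hg.2, hg'.2]
    · have := congrFun he v
      simpa [hv] using this
  · rintro h hh
    simp only [pproj, Finset.mem_image] at hh
    obtain ⟨f, hf, rfl⟩ := hh
    rw [Finset.mem_filter] at hf
    refine ⟨fun v => if v ∈ A then some (f v) else none, ?_, ?_⟩
    · rw [Finset.mem_filter]
      constructor
      · simp only [pproj, Finset.mem_image]; exact ⟨f, hf.1, rfl⟩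
      · simp [hx, hf.2]
    · funext v
      by_cases hv : v = x
      · subst hv; simp
      · simp [hv, Finset.mem_erase]

lemma card_pproj_eq_sum [Fintype K] [DecidableEq K] (A : Finset V) {x : V} (hx : x ∈ A)
    (F : Finset (V → K)) :
    (pproj A F).card = ∑ a : K, (pproj (A.erase x) (F.filter (fun f => f x = a))).card := by
  rw [Finset.card_eq_sum_card_fiberwise
    (f := fun g : V → Option K => g x) (t := Finset.univ) (fun _ _ => Finset.mem_univ _)]
  rw [Fintype.sum_option (fun o => ((pproj A F).filter (fun g => g x = o)).card)]
  have hnone : ((pproj A F).filter (fun g => g x = none)).card = 0 := by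
    rw [Finset.card_eq_zero, Finset.filter_eq_empty_iff]
    intro g hg
    simp only [pproj, Finset.mem_image] at hg
    obtain ⟨f, _, rfl⟩ := hg
    simp [hx]
  rw [hnone, zero_add]
  exact Finset.sum_congr rfl fun a _ => card_fiber A hx F a

end ShearerAux

/-- Generalized Hölder inequality with equal exponents. -/
lemma holder_k {ι α : Type*} (J : Finset ι) (T : Finset α) (u : ι → α → ℝ)
    (hu : ∀ i ∈ J, ∀ a ∈ T, 0 ≤ u i a) (hJ : J.Nonempty) :
    ∑ a ∈ T, ∏ i ∈ J, u i a ^ ((J.card : ℝ)⁻¹) ≤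
      ∏ i ∈ J, (∑ a ∈ T, u i a) ^ ((J.card : ℝ)⁻¹) := by
  set c : ℝ := (J.card : ℝ)⁻¹ with hc
  have hk0 : 0 < (J.card : ℝ) := by exact_mod_cast hJ.card_pos
  have hcpos : 0 < c := inv_pos.mpr hk0
  by_cases hS : ∃ i ∈ J, ∑ a ∈ T, u i a = 0
  · obtain ⟨i0, hi0, hS0⟩ := hS
    have hzero : ∀ a ∈ T, u i0 a = 0 :=
      (Finset.sum_eq_zero_iff_of_nonneg (fun a ha => hu i0 hi0 a ha)).mp hS0
    have hL : ∑ a ∈ T, ∏ i ∈ J, u i a ^ c = 0 := by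
      apply Finset.sum_eq_zero
      intro a ha
      apply Finset.prod_eq_zero hi0
      rw [hzero a ha, Real.zero_rpow hcpos.ne']
    rw [hL]
    exact Finset.prod_nonneg fun i hi =>
      Real.rpow_nonneg (Finset.sum_nonneg fun a ha => hu i hi a ha) _
  push_neg at hS
  have hSpos : ∀ i ∈ J, 0 < ∑ a ∈ T, u i a := fun i hi =>
    lt_of_le_of_ne (Finset.sum_nonneg fun a ha => hu i hi a ha) (Ne.symm (hS i hi))
  have key : ∀ a ∈ T, ∏ i ∈ J, u i a ^ c ≤
      (∏ i ∈ J, (∑ b ∈ T, u i b) ^ c) * ∑ i ∈ J, c * (u i a / (∑ b ∈ T, u i b)) := by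
    intro a ha
    have h1 : ∏ i ∈ J, u i a ^ c
        = (∏ i ∈ J, (∑ b ∈ T, u i b) ^ c) * ∏ i ∈ J, (u i a / ∑ b ∈ T, u i b) ^ c := by
      rw [← Finset.prod_mul_distrib]
      refine Finset.prod_congr rfl fun i hi => ?_
      rw [← Real.mul_rpow (hSpos i hi).le
        (div_nonneg (hu i hi a ha) (hSpos i hi).le)]
      rw [mul_comm, div_mul_cancel₀ _ (hSpos i hi).ne']
    rw [h1]
    refine mul_le_mul_of_nonneg_left ?_
      (Finset.prod_nonneg fun i hi => Real.rpow_nonneg (hSpos i hi).le _)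
    refine Real.geom_mean_le_arith_mean_weighted J _ _ (fun i _ => hcpos.le) ?_
      (fun i hi => div_nonneg (hu i hi a ha) (hSpos i hi).le)
    rw [Finset.sum_const, nsmul_eq_mul, hc, mul_inv_cancel₀ hk0.ne']
  calc ∑ a ∈ T, ∏ i ∈ J, u i a ^ c
      ≤ ∑ a ∈ T, ((∏ i ∈ J, (∑ b ∈ T, u i b) ^ c) * ∑ i ∈ J, c * (u i a / ∑ b ∈ T, u i b)) :=
        Finset.sum_le_sum key
    _ = (∏ i ∈ J, (∑ b ∈ T, u i b) ^ c)
          * ∑ a ∈ T, ∑ i ∈ J, c * (u i a / ∑ b ∈ T, u i b) := by rw [Finset.mul_sum]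
    _ = ∏ i ∈ J, (∑ b ∈ T, u i b) ^ c := by
        rw [Finset.sum_comm]
        have h2 : ∀ i ∈ J, ∑ a ∈ T, c * (u i a / ∑ b ∈ T, u i b) = c := by
          intro i hi
          rw [← Finset.mul_sum, ← Finset.sum_div, div_self (hSpos i hi).ne', mul_one]
        rw [Finset.sum_congr rfl h2, Finset.sum_const, nsmul_eq_mul, hc,
          mul_inv_cancel₀ hk0.ne', mul_one]

/-- Shearer-type inequality for uniform covers, combinatorial form. -/
lemma shearer {V K ι : Type*} [DecidableEq V] [Fintype K] [DecidableEq K]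
    (k : ℕ) (hk : 0 < k) :
    ∀ s : Finset V, ∀ (I : Finset ι) (A : ι → Finset V) (F : Finset (V → K)),
      (∀ i ∈ I, A i ⊆ s) →
      (∀ v ∈ s, k ≤ (I.filter (fun i => v ∈ A i)).card) →
      ((pproj s F).card : ℝ) ≤ ∏ i ∈ I, ((pproj (A i) F).card : ℝ) ^ ((k : ℝ)⁻¹) := by
  intro s
  induction s using Finset.strongInduction with
  | _ s ih =>
  intro I A F hsub hcov
  rcases s.eq_empty_or_nonempty with rfl | ⟨x, hx⟩
  · rcases F.eq_empty_or_nonempty with rfl | hF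
    · have : pproj (∅ : Finset V) (∅ : Finset (V → K)) = ∅ := by simp [pproj]
      rw [this]
      simp only [Finset.card_empty, Nat.cast_zero]
      exact Finset.prod_nonneg fun i _ => Real.rpow_nonneg (Nat.cast_nonneg _) _
    · have h1 : ((pproj (∅ : Finset V) F).card : ℝ) ≤ 1 := by
        have hsub1 : pproj (∅ : Finset V) F ⊆ {fun _ => none} := by
          intro g hg
          simp only [pproj, Finset.mem_image] at hg
          obtain ⟨f, _, rfl⟩ := hg
          simp
        exact_mod_cast le_trans (Finset.card_le_card hsub1) (by simp)
      refine h1.trans ?_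
      have hone : ∏ i ∈ I, (1 : ℝ) ≤ ∏ i ∈ I, ((pproj (A i) F).card : ℝ) ^ ((k : ℝ)⁻¹) := by
        refine Finset.prod_le_prod (fun _ _ => zero_le_one) ?_
        intro i hi
        have hne : (pproj (A i) F).Nonempty := hF.image _
        have h2 : (1 : ℝ) ≤ ((pproj (A i) F).card : ℝ) := by
          exact_mod_cast hne.card_pos
        calc (1 : ℝ) = ((pproj (A i) F).card : ℝ) ^ (0 : ℝ) := (Real.rpow_zero _).symm
          _ ≤ ((pproj (A i) F).card : ℝ) ^ ((k : ℝ)⁻¹) :=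
              Real.rpow_le_rpow_of_exponent_le h2 (by positivity)
      simpa using hone
  · -- inductive step
    set s' := s.erase x with hs'
    have hss : s' ⊂ s := Finset.erase_ssubset hx
    obtain ⟨J, hJsub, hJcard⟩ := Finset.exists_subset_card_eq (hcov x hx)
    have hJI : J ⊆ I := hJsub.trans (Finset.filter_subset _ _)
    have hxJ : ∀ i ∈ J, x ∈ A i := fun i hi => (Finset.mem_filter.mp (hJsub hi)).2
    have hJne : J.Nonempty := Finset.card_pos.mp (hJcard ▸ hk)
    set Fa : K → Finset (V → K) := fun a => F.filter (fun f => f x = a) with hFa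
    set A' : ι → Finset V := fun i => (A i).erase x with hA'
    have ihall : ∀ a : K, ((pproj s' (Fa a)).card : ℝ) ≤
        ∏ i ∈ I, ((pproj (A' i) (Fa a)).card : ℝ) ^ ((k : ℝ)⁻¹) := by
      intro a
      apply ih s' hss I A' (Fa a)
      · intro i hi
        exact Finset.erase_subset_erase x (hsub i hi)
      · intro v hv
        obtain ⟨hvx, hvs⟩ := Finset.mem_erase.mp hv
        have heq : I.filter (fun i => v ∈ A' i) = I.filter (fun i => v ∈ A i) := by
          apply Finset.filter_congr
          intro i _
          simp [hA', Finset.mem_erase, hvx]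
        rw [heq]
        exact hcov v hvs
    have hsplit : ((pproj s F).card : ℝ) = ∑ a : K, ((pproj s' (Fa a)).card : ℝ) := by
      exact_mod_cast congrArg (Nat.cast : ℕ → ℝ) (card_pproj_eq_sum s hx F)
    set P : ι → ℝ := fun i => ((pproj (A i) F).card : ℝ) with hP
    set u : ι → K → ℝ := fun i a => ((pproj (A' i) (Fa a)).card : ℝ) with hu
    have hPnn : ∀ i, 0 ≤ P i := fun i => Nat.cast_nonneg _
    have hunn : ∀ i a, 0 ≤ u i a := fun i a => Nat.cast_nonneg _
    have huP : ∀ i, ∀ a, u i a ≤ P i := by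
      intro i a
      have h1 : (pproj (A' i) (Fa a)).card ≤ (pproj (A' i) F).card :=
        Finset.card_le_card (pproj_mono (Finset.filter_subset _ _))
      have h2 : (pproj (A' i) F).card ≤ (pproj (A i) F).card :=
        card_pproj_erase_le (A i) x F
      simp only [hu, hP]
      exact_mod_cast le_trans h1 h2
    have hsum : ∀ i ∈ J, ∑ a : K, u i a = P i := by
      intro i hi
      simp only [hu, hP, hFa, hA']
      exact_mod_cast (congrArg (Nat.cast : ℕ → ℝ)
        (card_pproj_eq_sum (A i) (hxJ i hi) F)).symm
    calc ((pproj s F).card : ℝ) = ∑ a : K, ((pproj s' (Fa a)).card : ℝ) := hsplit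
      _ ≤ ∑ a : K, ∏ i ∈ I, (u i a) ^ ((k : ℝ)⁻¹) := Finset.sum_le_sum fun a _ => ihall a
      _ = ∑ a : K, ((∏ i ∈ I \ J, (u i a) ^ ((k : ℝ)⁻¹)) * ∏ i ∈ J, (u i a) ^ ((k : ℝ)⁻¹)) := by
          refine Finset.sum_congr rfl fun a _ => ?_
          rw [Finset.prod_sdiff hJI]
      _ ≤ ∑ a : K, ((∏ i ∈ I \ J, (P i) ^ ((k : ℝ)⁻¹)) * ∏ i ∈ J, (u i a) ^ ((k : ℝ)⁻¹)) := by
          refine Finset.sum_le_sum fun a _ => ?_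
          refine mul_le_mul_of_nonneg_right ?_
            (Finset.prod_nonneg fun i _ => Real.rpow_nonneg (hunn i a) _)
          refine Finset.prod_le_prod (fun i _ => Real.rpow_nonneg (hunn i a) _)
            (fun i _ => Real.rpow_le_rpow (hunn i a) (huP i a) (by positivity))
      _ = (∏ i ∈ I \ J, (P i) ^ ((k : ℝ)⁻¹)) * ∑ a : K, ∏ i ∈ J, (u i a) ^ ((k : ℝ)⁻¹) := by
          rw [Finset.mul_sum]
      _ ≤ (∏ i ∈ I \ J, (P i) ^ ((k : ℝ)⁻¹)) * ∏ i ∈ J, (∑ a : K, u i a) ^ ((k : ℝ)⁻¹) := by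
          refine mul_le_mul_of_nonneg_left ?_
            (Finset.prod_nonneg fun i _ => Real.rpow_nonneg (hPnn i) _)
          have := holder_k J Finset.univ u (fun i _ a _ => hunn i a) hJne
          rw [hJcard] at this
          exact this
      _ = (∏ i ∈ I \ J, (P i) ^ ((k : ℝ)⁻¹)) * ∏ i ∈ J, (P i) ^ ((k : ℝ)⁻¹) := by
          congr 1
          exact Finset.prod_congr rfl fun i hi => by rw [hsum i hi]
      _ = ∏ i ∈ I, (P i) ^ ((k : ℝ)⁻¹) := Finset.prod_sdiff hJI

/-- For an `r`-regular graph `G` on `n` vertices, the number of `𝓛`-legal closed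
neighborhood colorings of `G` is at most `N(r+1,𝓛)^(n/(r+1))`. -/
theorem stmt3 {V K : Type*} [Fintype V] [Fintype K] (G : SimpleGraph V) [DecidableRel G.Adj]
    (r : ℕ) (hreg : G.IsRegularOfDegree r) (𝓛 : Finset (Multiset K)) :
    ({φ : V → K | ∀ v : V, φ v ::ₘ (G.neighborFinset v).val.map φ ∈ 𝓛}.ncard : ℝ) ≤
      (({f : Fin (r + 1) → K | Finset.univ.val.map f ∈ 𝓛}.ncard : ℝ)) ^
        ((Fintype.card V : ℝ) / (r + 1)) := by
  classical
  rcases isEmpty_or_nonempty V with hV | hV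
  · -- V is empty
    have h1 : ({φ : V → K | ∀ v : V, φ v ::ₘ (G.neighborFinset v).val.map φ ∈ 𝓛})
        = Set.univ := by
      ext φ
      simp only [Set.mem_setOf_eq, Set.mem_univ, iff_true]
      intro v
      exact hV.elim v
    have h2 : Fintype.card V = 0 := Fintype.card_eq_zero
    rw [h1, Set.ncard_univ, Nat.card_eq_fintype_card, h2]
    have h3 : Fintype.card (V → K) = 1 := by
      rw [Fintype.card_fun, h2, pow_zero]
    rw [h3]
    norm_num
  rcases isEmpty_or_nonempty K with hK | hK
  · -- K is empty, V nonempty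
    have h1 : ({φ : V → K | ∀ v : V, φ v ::ₘ (G.neighborFinset v).val.map φ ∈ 𝓛})
        = (∅ : Set (V → K)) := by
      haveI : IsEmpty (V → K) := ⟨fun φ => (hK.elim (φ (Classical.arbitrary V)))⟩
      exact Set.eq_empty_of_isEmpty _
    rw [h1, Set.ncard_empty]
    push_cast
    positivity
  -- main case
  haveI := Classical.decEq V
  haveI := Classical.decEq K
  obtain ⟨k0⟩ := hK
  set Q : (V → K) → Prop := fun φ => ∀ v : V, φ v ::ₘ (G.neighborFinset v).val.map φ ∈ 𝓛
    with hQ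
  set F : Finset (V → K) := Finset.univ.filter Q with hF
  set A : V → Finset V := fun v => insert v (G.neighborFinset v) with hA
  have hnotmem : ∀ v : V, v ∉ G.neighborFinset v := fun v => by
    simp [SimpleGraph.mem_neighborFinset]
  have hAcard : ∀ v, (A v).card = r + 1 := by
    intro v
    rw [hA]
    simp only
    rw [Finset.card_insert_of_notMem (hnotmem v)]
    rw [SimpleGraph.card_neighborFinset_eq_degree, hreg v]
  have hcov : ∀ v : V, (Finset.univ.filter (fun w => v ∈ A w)).card = r + 1 := by
    intro v
    have heq : Finset.univ.filter (fun w => v ∈ A w) = A v := by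
      ext w
      simp only [Finset.mem_filter, Finset.mem_univ, true_and, hA, Finset.mem_insert,
        SimpleGraph.mem_neighborFinset]
      constructor
      · rintro (rfl | h)
        · exact Or.inl rfl
        · exact Or.inr h.symm
      · rintro (rfl | h)
        · exact Or.inl rfl
        · exact Or.inr h.symm
    rw [heq, hAcard]
  have main := shearer (V := V) (K := K) (ι := V) (r + 1) (Nat.succ_pos r)
    Finset.univ Finset.univ A F (fun i _ => Finset.subset_univ _)
    (fun v _ => le_of_eq (hcov v).symm)
  have hproj : F.card = (pproj Finset.univ F).card := by
    apply Finset.card_bij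
      (fun f _ => fun v => if v ∈ (Finset.univ : Finset V) then some (f v) else none)
    · intro f hf
      simp only [pproj, Finset.mem_image]
      exact ⟨f, hf, rfl⟩
    · intro f hf f' hf' h
      funext v
      have h7 := congrFun h v
      simp only [Finset.mem_univ, if_true] at h7
      exact Option.some_injective _ h7
    · intro g hg
      simp only [pproj, Finset.mem_image] at hg
      obtain ⟨f, hf, rfl⟩ := hg
      exact ⟨f, hf, rfl⟩
  set Nset : Finset (Fin (r+1) → K) :=
    Finset.univ.filter (fun f => Finset.univ.val.map f ∈ 𝓛) with hNset
  have hbound : ∀ v : V, (pproj (A v) F).card ≤ Nset.card := by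
    intro v
    set e : Fin (r+1) ≃ {a // a ∈ A v} := (Finset.equivFinOfCardEq (hAcard v)).symm with he
    have hval : ∀ f : V → K,
        Finset.univ.val.map (fun j : Fin (r+1) => f ((e j : {a // a ∈ A v}) : V))
          = (A v).val.map f := by
      intro f
      have h2 : (Finset.univ : Finset (Fin (r+1))).map e.toEmbedding = Finset.univ :=
        Finset.map_univ_equiv e
      have h2' : (Finset.univ : Finset (Fin (r+1))).val.map (fun j => e j)
          = (Finset.univ : Finset {a // a ∈ A v}).val := by
        rw [← h2, Finset.map_val]
        rfl
      calc Finset.univ.val.map (fun j : Fin (r+1) => f ((e j : {a // a ∈ A v}) : V))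
          = ((Finset.univ.val.map (fun j : Fin (r+1) => e j)).map
              (fun a : {a // a ∈ A v} => (a : V))).map f := by
            rw [Multiset.map_map, Multiset.map_map]
            rfl
        _ = (A v).val.map f := by
            rw [h2', Finset.univ_eq_attach, Finset.attach_val, Multiset.map_map]
            exact Multiset.attach_map_val' _ _
    apply Finset.card_le_card_of_injOn
      (fun g => fun j : Fin (r+1) => (g ((e j : {a // a ∈ A v}) : V)).getD k0)
    · intro g hg
      simp only [Finset.mem_coe, pproj, Finset.mem_image] at hg
      obtain ⟨f, hf, rfl⟩ := hg
      rw [hF, Finset.mem_filter] at hf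
      have hfun : (fun j : Fin (r+1) =>
          ((fun v' => if v' ∈ A v then some (f v') else none) ((e j : {a // a ∈ A v}) : V)).getD k0)
            = fun j : Fin (r+1) => f ((e j : {a // a ∈ A v}) : V) := by
        funext j
        simp [(e j).2]
      rw [hNset, Finset.mem_coe, Finset.mem_filter]
      refine ⟨Finset.mem_univ _, ?_⟩
      beta_reduce
      rw [hfun, hval f]
      have h5 : (A v).val.map f = f v ::ₘ (G.neighborFinset v).val.map f := by
        rw [hA]
        simp only
        rw [Finset.insert_val_of_notMem (hnotmem v), Multiset.map_cons]
      rw [h5]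
      exact hf.2 v
    · intro g hg g' hg' hgg
      simp only [Finset.mem_coe, pproj, Finset.mem_image] at hg hg'
      obtain ⟨f, hf, rfl⟩ := hg
      obtain ⟨f', hf', rfl⟩ := hg'
      funext w
      by_cases hw : w ∈ A v
      · have h6 := congrFun hgg (e.symm ⟨w, hw⟩)
        simp only [Equiv.apply_symm_apply] at h6
        simpa [hw] using h6
      · simp [hw]
  -- put everything together
  have hL : ({φ : V → K | Q φ}.ncard) = F.card := by
    rw [Set.ncard_eq_toFinset_card', Set.toFinset_setOf]
  have hR : ({f : Fin (r + 1) → K | Finset.univ.val.map f ∈ 𝓛}.ncard) = Nset.card := by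
    rw [Set.ncard_eq_toFinset_card', Set.toFinset_setOf]
  rw [hL, hR]
  have hN0 : (0:ℝ) ≤ (Nset.card : ℝ) := Nat.cast_nonneg _
  calc (F.card : ℝ) = ((pproj Finset.univ F).card : ℝ) := by exact_mod_cast hproj
    _ ≤ ∏ v : V, ((pproj (A v) F).card : ℝ) ^ (((r+1 : ℕ) : ℝ))⁻¹ := main
    _ ≤ ∏ v : V, ((Nset.card : ℝ)) ^ (((r+1 : ℕ) : ℝ))⁻¹ :=
        Finset.prod_le_prod (fun _ _ => Real.rpow_nonneg (Nat.cast_nonneg _) _)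
          (fun v _ => Real.rpow_le_rpow (Nat.cast_nonneg _)
            (by exact_mod_cast hbound v) (by positivity))
    _ = (Nset.card : ℝ) ^ ((Fintype.card V : ℝ) / (r+1)) := by
        rw [Finset.prod_const, ← Real.rpow_natCast
          ((Nset.card : ℝ) ^ (((r+1 : ℕ) : ℝ))⁻¹) (Finset.univ.card),
          ← Real.rpow_mul hN0]
        congr 1
        rw [Finset.card_univ]
        push_cast
        ring
end

section
/- If G is an r-regular graph on n vertices (r ≥ 1) and μ > 0, then the strong dominating set polynomial satisfies D^s_G(μ) ≤ D^s_{K_{r,r}}(μ)^(n/(2r)), where D^s_{K_{r,r}}(μ) = ((1+μ)^r - 1)^2. -/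
/-!
Write `N v` for the neighbourhood of `v` and `f T = μ ^ |T|` for nonempty `T`, `f ∅ = 0`.
Every vertex lies in exactly `r` neighbourhoods, so `μ ^ |S| = ∏ v, f (S ∩ N v) ^ (1/r)` when
`S` is strongly dominating, while the product vanishes otherwise. Finner's inequality for this
cover bounds `∑ S, ∏ v, f (S ∩ N v) ^ (1/r)` by `∏ v, (∑ T ⊆ N v, f T) ^ (1/r)`, which is
`((1 + μ) ^ r - 1) ^ (n / r)`. Finner's inequality itself follows by adding the ground elements
one at a time: merging the terms of `S` and `insert u S` only needs the superadditivity of the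
weighted geometric mean over the sets containing `u`, whose weights sum to `1`.
-/

open Finset

theorem Real.prod_rpow_add_prod_rpow_le {ι : Type*} (s : Finset ι) (w a b : ι → ℝ)
    (hw : ∀ i ∈ s, 0 ≤ w i) (hw' : ∑ i ∈ s, w i = 1) (ha : ∀ i ∈ s, 0 ≤ a i)
    (hb : ∀ i ∈ s, 0 ≤ b i) :
    ∏ i ∈ s, a i ^ w i + ∏ i ∈ s, b i ^ w i ≤ ∏ i ∈ s, (a i + b i) ^ w i := by
  set c := fun i => a i + b i
  have hc : ∀ i ∈ s, 0 ≤ c i := fun i hi => add_nonneg (ha i hi) (hb i hi)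
  -- Normalize by `c = a + b` (harmless where `c i = 0`, as then `a i = b i = 0`)
  -- and apply weighted AM-GM to `a / c` and to `b / c`.
  have rescale (x : ι → ℝ) (hx : ∀ i ∈ s, 0 ≤ x i) (hxc : ∀ i ∈ s, c i = 0 → x i = 0) :
      ∏ i ∈ s, x i ^ w i = (∏ i ∈ s, (x i / c i) ^ w i) * ∏ i ∈ s, c i ^ w i := by
    rw [← prod_mul_distrib]
    refine prod_congr rfl fun i hi => ?_
    rw [← Real.mul_rpow (div_nonneg (hx i hi) (hc i hi)) (hc i hi),
      div_mul_cancel_of_imp (hxc i hi)]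
  have amgm (x : ι → ℝ) (hx : ∀ i ∈ s, 0 ≤ x i) :
      ∏ i ∈ s, (x i / c i) ^ w i ≤ ∑ i ∈ s, w i * (x i / c i) :=
    Real.geom_mean_le_arith_mean_weighted s w _ hw hw' fun i hi => div_nonneg (hx i hi) (hc i hi)
  have hsum : ∑ i ∈ s, w i * (a i / c i) + ∑ i ∈ s, w i * (b i / c i) ≤ 1 := by
    rw [← sum_add_distrib, ← hw']
    refine sum_le_sum fun i hi => ?_
    rw [← mul_add, ← add_div]
    exact mul_le_of_le_one_right (hw i hi) (div_self_le_one _)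
  rw [rescale a ha fun i hi h => by linarith [ha i hi, hb i hi, show a i + b i = 0 from h],
    rescale b hb fun i hi h => by linarith [ha i hi, hb i hi, show a i + b i = 0 from h],
    ← add_mul]
  calc _ ≤ (1 : ℝ) * ∏ i ∈ s, c i ^ w i := by
        gcongr
        · exact prod_nonneg fun i hi => Real.rpow_nonneg (hc i hi) _
        · linarith [amgm a ha, amgm b hb]
    _ = _ := one_mul _

namespace Finset

variable {α ι : Type*} [DecidableEq α] [Fintype ι]

theorem prod_rpow_inter_add_prod_rpow_insert_inter_le (N : ι → Finset α) (p : ι → ℝ)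
    (hp : ∀ i, 0 ≤ p i) {u : α} (hu : ∑ i with u ∈ N i, p i = 1) (h : ι → Finset α → ℝ)
    (hh : ∀ i T, 0 ≤ h i T) (S : Finset α) :
    ∏ i, h i (S ∩ N i) ^ p i + ∏ i, h i (insert u S ∩ N i) ^ p i ≤
      ∏ i, (if u ∈ N i then h i (S ∩ N i) + h i (insert u (S ∩ N i))
        else h i (S ∩ N i)) ^ p i := by
  have insert_inter : ∀ i, insert u S ∩ N i =
      if u ∈ N i then insert u (S ∩ N i) else S ∩ N i := fun i => by
    split_ifs with hi
    exacts [insert_inter_of_mem hi, insert_inter_of_notMem hi]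
  have ite_rpow : ∀ (c : Prop) [Decidable c] (x y z : ℝ),
      (if c then x else y) ^ z = if c then x ^ z else y ^ z :=
    fun c _ x y z => apply_ite (· ^ z) c x y
  simp only [insert_inter, apply_ite (h _), ite_rpow, prod_ite]
  rw [← prod_filter_mul_prod_filter_not univ (fun i => u ∈ N i), ← add_mul]
  gcongr
  · exact prod_nonneg fun i _ => Real.rpow_nonneg (hh i _) _
  · exact Real.prod_rpow_add_prod_rpow_le _ p _ _ (fun i _ => hp i) hu
      (fun i _ => hh i _) (fun i _ => hh i _)

theorem sum_powerset_prod_rpow_inter_le (N : ι → Finset α) (p : ι → ℝ) (hp : ∀ i, 0 ≤ p i)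
    (U : Finset α) (hU : ∀ u ∈ U, ∑ i with u ∈ N i, p i = 1) (h : ι → Finset α → ℝ)
    (hh : ∀ i T, 0 ≤ h i T) :
    ∑ S ∈ U.powerset, ∏ i, h i (S ∩ N i) ^ p i ≤
      ∏ i, (∑ T ∈ (U ∩ N i).powerset, h i T) ^ p i := by
  induction U using Finset.induction_on generalizing h with
  | empty => simp
  | @insert u U hu ih =>
    set g : ι → Finset α → ℝ := fun i T =>
      if u ∈ N i then h i T + h i (insert u T) else h i T
    have hg : ∀ i T, 0 ≤ g i T := fun i T => by
      dsimp only [g]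
      split_ifs
      exacts [add_nonneg (hh i T) (hh i _), hh i T]
    have sum_g : ∀ i, ∑ T ∈ (U ∩ N i).powerset, g i T =
        ∑ T ∈ (insert u U ∩ N i).powerset, h i T := fun i => by
      by_cases hi : u ∈ N i
      · rw [insert_inter_of_mem hi, sum_powerset_insert fun h' => hu (mem_inter.mp h').1,
          ← sum_add_distrib]
        simp only [g, if_pos hi]
      · simp only [g, if_neg hi, insert_inter_of_notMem hi]
    calc ∑ S ∈ (insert u U).powerset, ∏ i, h i (S ∩ N i) ^ p i
        = ∑ S ∈ U.powerset, (∏ i, h i (S ∩ N i) ^ p i + ∏ i, h i (insert u S ∩ N i) ^ p i) := by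
          rw [sum_powerset_insert hu, sum_add_distrib]
      _ ≤ ∑ S ∈ U.powerset, ∏ i, g i (S ∩ N i) ^ p i :=
          sum_le_sum fun S _ => prod_rpow_inter_add_prod_rpow_insert_inter_le N p hp
            (hU u (mem_insert_self u U)) h hh S
      _ ≤ ∏ i, (∑ T ∈ (U ∩ N i).powerset, g i T) ^ p i :=
          ih (fun v hv => hU v (mem_insert_of_mem hv)) g hg
      _ = ∏ i, (∑ T ∈ (insert u U ∩ N i).powerset, h i T) ^ p i := by simp only [sum_g]

end Finset

theorem Finset.sum_powerset_ite_nonempty_pow {α R : Type*} [CommRing R] (s : Finset α) (x : R) :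
    ∑ T ∈ s.powerset, (if T.Nonempty then x ^ #T else 0) = (1 + x) ^ #s - 1 := by
  classical
  have ite_eq : ∀ T : Finset α, (if T.Nonempty then x ^ #T else 0) =
      x ^ #T - if T = ∅ then 1 else 0 := fun T => by
    rcases T.eq_empty_or_nonempty with rfl | hT
    · simp
    · simp [hT, hT.ne_empty]
  simp_rw [ite_eq, sum_sub_distrib, sum_ite_eq', empty_mem_powerset, if_true, add_comm 1 x]
  simpa using sum_pow_mul_eq_add_pow x 1 s

namespace SimpleGraph

variable {V : Type*} [Fintype V] [DecidableEq V] (G : SimpleGraph V) [DecidableRel G.Adj]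

theorem filter_mem_neighborFinset (u : V) :
    ({v | u ∈ G.neighborFinset v} : Finset V) = G.neighborFinset u := by
  ext v
  simp [G.adj_comm]

theorem sum_card_inter_neighborFinset (S : Finset V) :
    ∑ v, #(S ∩ G.neighborFinset v) = ∑ u ∈ S, G.degree u := by
  simp_rw [← filter_mem_eq_inter, card_filter]
  rw [sum_comm]
  simp_rw [← card_filter, filter_mem_neighborFinset, G.card_neighborFinset_eq_degree]

theorem inter_neighborFinset_nonempty_iff (S : Finset V) (v : V) :
    (S ∩ G.neighborFinset v).Nonempty ↔ ∃ u ∈ S, G.Adj u v := by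
  simp [Finset.Nonempty, G.adj_comm]

variable {G} in
theorem IsRegularOfDegree.prod_ite_nonempty_rpow {r : ℕ} (hreg : G.IsRegularOfDegree r)
    (hr : r ≠ 0) {μ : ℝ} (hμ : 0 ≤ μ) (S : Finset V) :
    ∏ v, (if (S ∩ G.neighborFinset v).Nonempty then μ ^ #(S ∩ G.neighborFinset v) else 0) ^
        (r : ℝ)⁻¹ =
      if ∀ v, ∃ u ∈ S, G.Adj u v then μ ^ #S else 0 := by
  have sum_card : ∑ v, #(S ∩ G.neighborFinset v) = #S * r := by
    rw [G.sum_card_inter_neighborFinset, sum_congr rfl fun u _ => hreg u, sum_const, smul_eq_mul]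
  rw [Real.finsetProd_rpow _ _ fun v _ => by positivity, Fintype.prod_ite_zero,
    prod_pow_eq_pow_sum, sum_card]
  simp only [G.inter_neighborFinset_nonempty_iff]
  split_ifs
  · rw [pow_mul, Real.pow_rpow_inv_natCast (by positivity) hr]
  · exact Real.zero_rpow (inv_ne_zero (Nat.cast_ne_zero.mpr hr))

end SimpleGraph

/-- For an `r`-regular graph `G` on `n` vertices and `μ > 0`, the strong dominating set
polynomial satisfies `D^s_G(μ) ≤ (((1+μ)^r - 1)^2)^(n/(2r))`. -/
theorem stmt7 {V : Type*} [Fintype V] [DecidableEq V] (G : SimpleGraph V) [DecidableRel G.Adj]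
    (r : ℕ) (hr : 1 ≤ r) (hreg : G.IsRegularOfDegree r) (μ : ℝ) (hμ : 0 < μ) :
    (∑ S ∈ Finset.univ.filter (fun S : Finset V => ∀ v : V, ∃ u ∈ S, G.Adj u v),
        μ ^ S.card) ≤
      (((1 + μ) ^ r - 1) ^ 2) ^ ((Fintype.card V : ℝ) / (2 * r)) := by
  have hr0 : r ≠ 0 := by omega
  set N : V → Finset V := fun v => G.neighborFinset v
  set h : Finset V → ℝ := fun T => if T.Nonempty then μ ^ #T else 0
  have hcover : ∀ u ∈ (univ : Finset V), ∑ v with u ∈ N v, (r : ℝ)⁻¹ = 1 := fun u _ => by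
    rw [sum_const, G.filter_mem_neighborFinset, G.card_neighborFinset_eq_degree, hreg u,
      nsmul_eq_mul]
    field_simp
  calc _ = ∑ S ∈ (univ : Finset V).powerset, ∏ v, h (S ∩ N v) ^ (r : ℝ)⁻¹ := by
        rw [powerset_univ, sum_filter]
        exact sum_congr rfl fun S _ => (hreg.prod_ite_nonempty_rpow hr0 hμ.le S).symm
    _ ≤ ∏ v, (∑ T ∈ (univ ∩ N v).powerset, h T) ^ (r : ℝ)⁻¹ :=
        sum_powerset_prod_rpow_inter_le N _ (fun _ => by positivity) univ hcover (fun _ => h)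
          (fun _ T => by dsimp only [h]; split_ifs <;> positivity)
    _ = ∏ _v : V, ((1 + μ) ^ r - 1) ^ (r : ℝ)⁻¹ := by
        simp only [univ_inter, h, sum_powerset_ite_nonempty_pow, N, G.card_neighborFinset_eq_degree,
          hreg _]
    _ = _ := by
        have : 0 ≤ (1 + μ) ^ r - 1 := sub_nonneg.mpr (one_le_pow₀ (by linarith))
        rw [prod_const, card_univ, ← Real.rpow_natCast, ← Real.rpow_mul this,
          ← Real.rpow_natCast _ 2, ← Real.rpow_mul this]
        congr 1
        push_cast
        field_simp
end

section
/- If G is an r-regular graph on n vertices (r ≥ 1) and q ≥ 1 an integer, then the number of proper q-colorings of the open neighborhood hypergraph 𝓝(G) is at most (q^r - q)^(n/r). -/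
/-!
Every vertex lies in exactly `r` of the neighbourhoods `N(v)`, so Shearer's lemma bounds the
`r`-th power of the number of proper colorings by the product over `v` of the number of their
restrictions to `N(v)`. Each such restriction is a non-constant map `N(v) → Fin q`, and there are
`q ^ r - q` of those. Shearer's lemma is proved by induction on the coordinates: splitting a family
of functions by the value at one vertex `x`, the `r` sets containing `x` are handled by Hölder's
inequality with exponents `1 / r`, the others by monotonicity.
-/

open Finset MeasureTheory
open scoped NNReal ENNReal

theorem NNReal.sum_prod_rpow_le_prod_sum_rpow {ι γ : Type*} (s : Finset ι) (t : Finset γ)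
    (f : ι → γ → ℝ≥0) {w : ι → ℝ} (hw : ∀ i ∈ s, 0 ≤ w i) (hw1 : ∑ i ∈ s, w i = 1) :
    ∑ c ∈ t, ∏ i ∈ s, f i c ^ w i ≤ ∏ i ∈ s, (∑ c ∈ t, f i c) ^ w i := by
  let _ : MeasurableSpace γ := ⊤
  have hcount (g : γ → ℝ≥0∞) : ∫⁻ c in t, g c ∂Measure.count = ∑ c ∈ t, g c := by
    simp [lintegral_finset]
  have := ENNReal.lintegral_prod_norm_pow_le (μ := Measure.count.restrict t) s
    (f := fun i c => (f i c : ℝ≥0∞)) (fun i _ => Measurable.aemeasurable (by measurability)) hw1 hw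
  simp only [hcount] at this
  rw [← ENNReal.coe_le_coe]
  push_cast
  convert this using 1
  · exact sum_congr rfl fun c _ => prod_congr rfl fun i hi =>
      ENNReal.coe_rpow_of_nonneg _ (hw i hi)
  · exact prod_congr rfl fun i hi => by
      rw [ENNReal.coe_rpow_of_nonneg _ (hw i hi), ENNReal.ofNNReal_finsetSum]

theorem NNReal.sum_prod_rpow_le_prod_rpow {ι γ : Type*} [Fintype ι] (t : Finset γ)
    (T : Finset ι) {e : ℝ} (he : 0 ≤ e) (hT : #T * e = 1) (P : ι → γ → ℝ≥0) (Q : ι → ℝ≥0)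
    (hout : ∀ i ∉ T, ∀ c ∈ t, P i c ≤ Q i) (hin : ∀ i ∈ T, ∑ c ∈ t, P i c ≤ Q i) :
    ∑ c ∈ t, ∏ i, P i c ^ e ≤ ∏ i, Q i ^ e := by
  classical
  calc ∑ c ∈ t, ∏ i, P i c ^ e
      = ∑ c ∈ t, (∏ i ∈ Tᶜ, P i c ^ e) * ∏ i ∈ T, P i c ^ e := by
        simp only [prod_compl_mul_prod]
    _ ≤ ∑ c ∈ t, (∏ i ∈ Tᶜ, Q i ^ e) * ∏ i ∈ T, P i c ^ e := by
        gcongr with c hc i hi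
        exact hout i (mem_compl.mp hi) c hc
    _ = (∏ i ∈ Tᶜ, Q i ^ e) * ∑ c ∈ t, ∏ i ∈ T, P i c ^ e := by rw [mul_sum]
    _ ≤ (∏ i ∈ Tᶜ, Q i ^ e) * ∏ i ∈ T, (∑ c ∈ t, P i c) ^ e := by
        gcongr
        exact sum_prod_rpow_le_prod_sum_rpow T t P (fun _ _ => he) (by simpa using hT)
    _ ≤ ∏ i, Q i ^ e := by
        rw [← prod_compl_mul_prod T]
        gcongr with i hi
        exact hin i hi

section Shearer

variable {V β ι : Type*} [DecidableEq β]

theorem Finset.sum_card_image_restrict_filter_le {s : Finset V} {x : V} (hx : x ∈ s)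
    (F : Finset (V → β)) :
    ∑ c ∈ F.image (· x), #((F.filter (· x = c)).image s.restrict) ≤ #(F.image s.restrict) := by
  rw [← card_biUnion]
  · exact card_le_card (biUnion_subset.mpr fun c _ => image_subset_image (filter_subset _ _))
  · intro c _ d _ hcd
    refine disjoint_left.mpr fun g hgc hgd => hcd ?_
    obtain ⟨φ, hφ, rfl⟩ := mem_image.mp hgc
    obtain ⟨ψ, hψ, hψφ⟩ := mem_image.mp hgd
    rw [← (mem_filter.mp hφ).2, ← (mem_filter.mp hψ).2]
    exact (congrFun hψφ ⟨x, hx⟩).symm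

variable [DecidableEq V] [Fintype ι]

theorem Finset.card_le_prod_card_image_restrict_rpow (A : ι → Finset V) {r : ℕ} (hr : r ≠ 0)
    (U : Finset V) (hU : ∀ v ∈ U, #{i | v ∈ A i} = r) (F : Finset (V → β))
    (hF : ∀ φ ∈ F, ∀ ψ ∈ F, ∀ v ∉ U, φ v = ψ v) :
    (#F : ℝ≥0) ≤ ∏ i, (#(F.image (A i).restrict) : ℝ≥0) ^ (r⁻¹ : ℝ) := by
  induction U using Finset.induction_on generalizing F with
  | empty =>
    obtain rfl | hne := F.eq_empty_or_nonempty
    · simp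
    have hsub : #F ≤ 1 := card_le_one.mpr fun φ hφ ψ hψ => funext fun v => hF φ hφ ψ hψ v (by simp)
    calc (#F : ℝ≥0) ≤ 1 := by exact_mod_cast hsub
      _ ≤ _ := one_le_prod' fun i _ =>
        NNReal.one_le_rpow (by exact_mod_cast (hne.image _).card_pos) (by positivity)
  | @insert x U hx ih =>
    have hfiber (c : β) : (#(F.filter (· x = c)) : ℝ≥0) ≤
        ∏ i, (#((F.filter (· x = c)).image (A i).restrict) : ℝ≥0) ^ (r⁻¹ : ℝ) := by
      refine ih (fun v hv => hU v (mem_insert_of_mem hv)) _ fun φ hφ ψ hψ v hv => ?_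
      rw [mem_filter] at hφ hψ
      by_cases hvx : v = x
      · rw [hvx, hφ.2, hψ.2]
      · exact hF φ hφ.1 ψ hψ.1 v (by simp [hvx, hv])
    calc (#F : ℝ≥0) = ∑ c ∈ F.image (· x), (#(F.filter (· x = c)) : ℝ≥0) := by
          exact_mod_cast card_eq_sum_card_image (· x) F
      _ ≤ ∑ c ∈ F.image (· x),
            ∏ i, (#((F.filter (· x = c)).image (A i).restrict) : ℝ≥0) ^ (r⁻¹ : ℝ) :=
          sum_le_sum fun c _ => hfiber c
      _ ≤ _ := by
        refine NNReal.sum_prod_rpow_le_prod_rpow _ {i | x ∈ A i} (by positivity)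
          (by simp [hU x (mem_insert_self x U), hr]) _ _ (fun i _ c _ => ?_) fun i hi => ?_
        · exact_mod_cast card_le_card (image_subset_image (filter_subset _ _))
        · exact_mod_cast sum_card_image_restrict_filter_le (mem_filter.mp hi).2 F

theorem Finset.card_pow_le_prod_card_image_restrict [Fintype V] (A : ι → Finset V) {r : ℕ}
    (hr : r ≠ 0) (hA : ∀ v, #{i | v ∈ A i} = r) (F : Finset (V → β)) :
    #F ^ r ≤ ∏ i, #(F.image (A i).restrict) := by
  have h := card_le_prod_card_image_restrict_rpow A hr univ (fun v _ => hA v) F (by simp)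
  have := pow_le_pow_left₀ (by positivity) h r
  rw [← prod_pow] at this
  simp only [NNReal.rpow_inv_natCast_pow _ hr] at this
  exact_mod_cast this

end Shearer

theorem Finset.card_image_restrict_le_card_pow_sub_card {V β : Type*} [DecidableEq V]
    [DecidableEq β] [Fintype β] {s : Finset V} (hs : s.Nonempty) (F : Finset (V → β))
    (hF : ∀ φ ∈ F, ∃ u ∈ s, ∃ w ∈ s, φ u ≠ φ w) :
    #(F.image s.restrict) ≤ Fintype.card β ^ #s - Fintype.card β := by
  have := hs.to_subtype
  have hconst : #(univ.image (Function.const s : β → s → β)) = Fintype.card β := by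
    rw [card_image_of_injective _ Function.const_injective, card_univ]
  calc #(F.image s.restrict) ≤ #(univ.image (Function.const s : β → s → β))ᶜ := by
        refine card_le_card fun g hg => ?_
        obtain ⟨φ, hφ, rfl⟩ := mem_image.mp hg
        obtain ⟨u, hu, w, hw, hne⟩ := hF φ hφ
        simp only [mem_compl, mem_image, mem_univ, true_and, not_exists]
        intro c hc
        exact hne ((congrFun hc ⟨u, hu⟩).symm.trans (congrFun hc ⟨w, hw⟩))
    _ = Fintype.card β ^ #s - Fintype.card β := by
        rw [card_compl, hconst, Fintype.card_fun, Fintype.card_coe]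

theorem Real.le_rpow_div_of_pow_le_s8 {x y : ℝ} (hx : 0 ≤ x) (hy : 0 ≤ y) {m n : ℕ} (hm : m ≠ 0)
    (h : x ^ m ≤ y ^ n) : x ≤ y ^ ((n : ℝ) / m) := by
  rw [← Real.pow_rpow_inv_natCast hx hm, div_eq_mul_inv, Real.rpow_mul hy, Real.rpow_natCast]
  exact Real.rpow_le_rpow (by positivity) h (by positivity)

theorem stmt8_general {V : Type*} [Fintype V] (G : SimpleGraph V) [DecidableRel G.Adj]
    (r : ℕ) (hr : 1 ≤ r) (hreg : G.IsRegularOfDegree r) (q : ℕ) :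
    ({φ : V → Fin q | ∀ v : V, ∃ u ∈ G.neighborFinset v, ∃ w ∈ G.neighborFinset v,
        φ u ≠ φ w}.ncard : ℝ) ≤
      ((q : ℝ) ^ r - q) ^ ((Fintype.card V : ℝ) / r) := by
  classical
  set F : Finset (V → Fin q) :=
    {φ | ∀ v : V, ∃ u ∈ G.neighborFinset v, ∃ w ∈ G.neighborFinset v, φ u ≠ φ w}
  rw [show {φ : V → Fin q | _} = (F : Set (V → Fin q)) by ext; simp [F], Set.ncard_coe_finset]
  have hcover (v : V) : #{u | v ∈ G.neighborFinset u} = r := by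
    rw [← hreg v, ← G.card_neighborFinset_eq_degree]
    congr 1
    ext u
    simp [G.adj_comm]
  have hproj (v : V) : #(F.image (G.neighborFinset v).restrict) ≤ q ^ r - q := by
    have hcard : #(G.neighborFinset v) = r := (G.card_neighborFinset_eq_degree v).trans (hreg v)
    have := card_image_restrict_le_card_pow_sub_card (card_pos.mp (by omega)) F
      fun φ hφ => (mem_filter.mp hφ).2 v
    rwa [hcard, Fintype.card_fin] at this
  have hcount : #F ^ r ≤ (q ^ r - q) ^ Fintype.card V :=
    (card_pow_le_prod_card_image_restrict _ (by omega) hcover F).trans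
      ((prod_le_prod' fun v _ => hproj v).trans_eq (by simp))
  have hcast : ((q ^ r - q : ℕ) : ℝ) = (q : ℝ) ^ r - q := by
    rw [Nat.cast_sub (Nat.le_self_pow (by omega) q), Nat.cast_pow]
  rw [← hcast]
  exact Real.le_rpow_div_of_pow_le_s8 (by positivity) (by positivity) (by omega)
    (by exact_mod_cast hcount)

/-- For an `r`-regular graph `G` on `n` vertices and `q ≥ 1`, the number of proper
`q`-colorings of the open neighborhood hypergraph of `G` is at most `(q^r - q)^(n/r)`. -/
theorem stmt8 {V : Type*} [Fintype V] (G : SimpleGraph V) [DecidableRel G.Adj]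
    (r : ℕ) (hr : 1 ≤ r) (hreg : G.IsRegularOfDegree r) (q : ℕ) (hq : 1 ≤ q) :
    ({φ : V → Fin q | ∀ v : V, ∃ u ∈ G.neighborFinset v, ∃ w ∈ G.neighborFinset v,
        φ u ≠ φ w}.ncard : ℝ) ≤
      ((q : ℝ) ^ r - q) ^ ((Fintype.card V : ℝ) / r) :=
  stmt8_general G r hr hreg q
end

section
/- If G is an r-regular graph on n vertices (r ≥ 1) and q ≥ r, then the number of rainbow q-colorings of the open neighborhood hypergraph 𝓝(G) is at most (q(q-1)⋯(q-r+1))^(n/r). -/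
open Finset MeasureTheory
open scoped ENNReal

/-!
Write `S|_A` for the set of restrictions to `A` of the functions in `S` (`proj A S`). Shearer's
lemma: if every point of `U` lies in at least `r` of the sets `F i`, then
`#(S|_U) ^ r ≤ ∏ i, #(S|_{F i})`. Induct on `U`: adding a point `u` splits `S` by the colour `x`
of `u`; the induction hypothesis bounds each colour class, and Hölder's inequality over `r` of the
sets containing `u` sums these bounds over `x`. For the rainbow colourings of `𝓝(G)` take
`F v = N(v)`: every vertex lies in exactly `r` neighbourhoods, and each restriction to `N(v)` is an
injection `N(v) → [q]`, of which there are `q(q-1)⋯(q-r+1)`.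
-/

theorem ENNReal.sum_prod_rpow_le_prod_sum_rpow {α ι : Type*} [Fintype α] (s : Finset ι)
    (f : ι → α → ℝ≥0∞) {p : ι → ℝ} (hp : ∑ i ∈ s, p i = 1) (h2p : ∀ i ∈ s, 0 ≤ p i) :
    ∑ x, ∏ i ∈ s, f i x ^ p i ≤ ∏ i ∈ s, (∑ x, f i x) ^ p i := by
  let _ : MeasurableSpace α := ⊤
  have : MeasurableSingletonClass α := ⟨fun _ => trivial⟩
  simpa only [lintegral_count, tsum_fintype] using lintegral_prod_norm_pow_le (μ := .count) s
    (fun i _ => (measurable_from_top (f := f i)).aemeasurable) hp h2p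

theorem sum_pow_card_le_mul_prod_sum {α ι : Type*} [Fintype α] {s : Finset ι}
    (hs : s.Nonempty) {K : ℕ} {c : α → ℕ} {e : ι → α → ℕ}
    (h : ∀ x, c x ^ #s ≤ K * ∏ i ∈ s, e i x) :
    (∑ x, c x) ^ #s ≤ K * ∏ i ∈ s, ∑ x, e i x := by
  have hn : (0 : ℝ) < #s := by exact_mod_cast hs.card_pos
  have hp : (0 : ℝ) ≤ (#s : ℝ)⁻¹ := by positivity
  suffices (∑ x, c x : ℝ≥0∞) ≤ ((K * ∏ i ∈ s, ∑ x, e i x : ℕ) : ℝ≥0∞) ^ (#s : ℝ)⁻¹ by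
    rw [ENNReal.le_rpow_inv_iff hn, ENNReal.rpow_natCast] at this
    exact_mod_cast this
  calc (∑ x, c x : ℝ≥0∞)
      ≤ ∑ x, (K : ℝ≥0∞) ^ (#s : ℝ)⁻¹ * ∏ i ∈ s, (e i x : ℝ≥0∞) ^ (#s : ℝ)⁻¹ := by
        gcongr with x
        rw [ENNReal.prod_rpow_of_nonneg hp, ← ENNReal.mul_rpow_of_nonneg _ _ hp,
          ENNReal.le_rpow_inv_iff hn, ENNReal.rpow_natCast]
        exact_mod_cast h x
    _ = (K : ℝ≥0∞) ^ (#s : ℝ)⁻¹ * ∑ x, ∏ i ∈ s, (e i x : ℝ≥0∞) ^ (#s : ℝ)⁻¹ := by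
        rw [mul_sum]
    _ ≤ (K : ℝ≥0∞) ^ (#s : ℝ)⁻¹ * ∏ i ∈ s, (∑ x, (e i x : ℝ≥0∞)) ^ (#s : ℝ)⁻¹ := by
        gcongr
        refine ENNReal.sum_prod_rpow_le_prod_sum_rpow s _ ?_ fun _ _ => hp
        rw [sum_const, nsmul_eq_mul, mul_inv_cancel₀ hn.ne']
    _ = _ := by
        push_cast
        rw [ENNReal.prod_rpow_of_nonneg hp, ENNReal.mul_rpow_of_nonneg _ _ hp]

section Projection

variable {ι β : Type*} [DecidableEq β]

def proj (F : Finset ι) (S : Finset (ι → β)) : Finset (F → β) := S.image F.restrict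

theorem card_proj_eq_sum_card_proj_filter [Fintype β] {F : Finset ι} {u : ι} (hu : u ∈ F)
    (S : Finset (ι → β)) : #(proj F S) = ∑ x, #(proj F {φ ∈ S | φ u = x}) := by
  rw [card_eq_sum_card_fiberwise (f := fun g : F → β => g ⟨u, hu⟩) fun _ _ => mem_univ _]
  simp only [proj, filter_image]
  rfl

theorem card_proj_insert_of_forall_eq [DecidableEq ι] {u : ι} {x : β} (U : Finset ι)
    {T : Finset (ι → β)} (hT : ∀ φ ∈ T, φ u = x) : #(proj (insert u U) T) = #(proj U T) := by
  have : proj U T =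
      (proj (insert u U) T).image (restrict₂ (π := fun _ => β) (subset_insert u U)) := by
    rw [proj, proj, image_image, restrict₂_comp_restrict]
  rw [this, card_image_of_injOn]
  rintro _ hg _ hg' h
  obtain ⟨φ, hφ, rfl⟩ := mem_image.1 hg
  obtain ⟨ψ, hψ, rfl⟩ := mem_image.1 hg'
  funext ⟨v, hv⟩
  rcases mem_insert.1 hv with rfl | hv
  · simp [hT φ hφ, hT ψ hψ]
  · exact congrFun h ⟨v, hv⟩

theorem card_proj_univ [Fintype ι] (S : Finset (ι → β)) : #(proj univ S) = #S :=
  card_image_of_injective _ fun _ _ h => funext fun v => congrFun h ⟨v, mem_univ v⟩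

theorem card_proj_le_descFactorial [Fintype β] {F : Finset ι} {T : Finset (ι → β)}
    (hT : ∀ φ ∈ T, Set.InjOn φ F) : #(proj F T) ≤ (Fintype.card β).descFactorial #F := by
  classical
  calc #(proj F T) ≤ #({g : F → β | Function.Injective g} : Finset _) := by
        refine card_le_card fun _ hg => ?_
        obtain ⟨φ, hφ, rfl⟩ := mem_image.1 hg
        exact mem_filter.2 ⟨mem_univ _, fun a b h => Subtype.ext (hT φ hφ a.2 b.2 h)⟩
    _ = Fintype.card (F ↪ β) := by
        rw [← Fintype.card_subtype]
        exact Fintype.card_congr (Equiv.subtypeInjectiveEquivEmbedding _ _)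
    _ = _ := by simp [Fintype.card_embedding_eq]

theorem card_proj_pow_le_prod_card_proj [DecidableEq ι] [Fintype β] {κ : Type*} [Fintype κ]
    {r : ℕ} (hr : r ≠ 0) (F : κ → Finset ι) (U : Finset ι) (hU : ∀ v ∈ U, r ≤ #{i | v ∈ F i})
    (S : Finset (ι → β)) : #(proj U S) ^ r ≤ ∏ i, #(proj (F i) S) := by
  classical
  induction U using Finset.induction_on generalizing S with
  | empty =>
    rcases S.eq_empty_or_nonempty with rfl | hS
    · simp [proj, hr]
    · calc #(proj ∅ S) ^ r ≤ 1 := pow_le_one₀ (Nat.zero_le _) (card_le_one_of_subsingleton _)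
        _ ≤ _ := Nat.one_le_iff_ne_zero.2 <| prod_ne_zero_iff.2 fun i _ =>
          (hS.image _).card_pos.ne'
  | insert u U _ ih =>
    obtain ⟨s, hsu, hsr⟩ := exists_subset_card_eq (hU u (mem_insert_self u U))
    have hu : ∀ i ∈ s, u ∈ F i := fun i hi => (mem_filter.1 (hsu hi)).2
    let slice (x : β) : Finset (ι → β) := {φ ∈ S | φ u = x}
    have hslice (x : β) : #(proj U (slice x)) ^ #s
        ≤ (∏ i ∈ univ \ s, #(proj (F i) S)) * ∏ i ∈ s, #(proj (F i) (slice x)) := by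
      calc #(proj U (slice x)) ^ #s ≤ ∏ i, #(proj (F i) (slice x)) :=
            hsr ▸ ih (fun v hv => hU v (mem_insert_of_mem hv)) (slice x)
        _ = (∏ i ∈ univ \ s, #(proj (F i) (slice x))) * ∏ i ∈ s, #(proj (F i) (slice x)) :=
            (prod_sdiff (subset_univ s)).symm
        _ ≤ _ := by
            gcongr with i
            exact image_subset_image (filter_subset _ _)
    calc #(proj (insert u U) S) ^ r = (∑ x, #(proj U (slice x))) ^ #s := by
          rw [card_proj_eq_sum_card_proj_filter (mem_insert_self u U), hsr]
          congr 1
          exact sum_congr rfl fun x _ =>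
            card_proj_insert_of_forall_eq U fun _ hφ => (mem_filter.1 hφ).2
      _ ≤ (∏ i ∈ univ \ s, #(proj (F i) S)) * ∏ i ∈ s, ∑ x, #(proj (F i) (slice x)) :=
          sum_pow_card_le_mul_prod_sum (card_pos.1 (hsr ▸ Nat.pos_of_ne_zero hr)) hslice
      _ = ∏ i, #(proj (F i) S) := by
          rw [← prod_congr rfl fun i hi => card_proj_eq_sum_card_proj_filter (hu i hi) S,
            prod_sdiff (subset_univ s)]

end Projection

theorem SimpleGraph.card_filter_mem_neighborFinset {V : Type*} [Fintype V] [DecidableEq V]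
    (G : SimpleGraph V) [DecidableRel G.Adj] (v : V) :
    #{w | v ∈ G.neighborFinset w} = G.degree v := by
  rw [← G.card_neighborFinset_eq_degree]
  congr 1
  ext w
  simp [G.adj_comm]

theorem stmt10_general {V : Type*} [Fintype V] (G : SimpleGraph V) [DecidableRel G.Adj]
    (r : ℕ) (hr : 1 ≤ r) (hreg : G.IsRegularOfDegree r) (q : ℕ) :
    ({φ : V → Fin q | ∀ v : V, Set.InjOn φ (G.neighborSet v)}.ncard : ℝ) ≤
      (q.descFactorial r : ℝ) ^ ((Fintype.card V : ℝ) / r) := by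
  classical
  set S : Finset (V → Fin q) := {φ | ∀ v, Set.InjOn φ (G.neighborSet v)}
  have hS : {φ : V → Fin q | ∀ v : V, Set.InjOn φ (G.neighborSet v)}.ncard = #S := by
    rw [← Set.ncard_coe_finset]
    simp [S]
  have hbound : #S ^ r ≤ q.descFactorial r ^ Fintype.card V :=
    calc #S ^ r = #(proj univ S) ^ r := by rw [card_proj_univ]
      _ ≤ ∏ v, #(proj (G.neighborFinset v) S) :=
          card_proj_pow_le_prod_card_proj (by omega) _ _
            (fun v _ => (G.card_filter_mem_neighborFinset v).trans (hreg v) |>.ge) S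
      _ ≤ q.descFactorial r ^ Fintype.card V := by
          refine prod_le_pow_card _ _ _ fun v _ => ?_
          have := card_proj_le_descFactorial (F := G.neighborFinset v) (T := S)
            fun φ hφ => by simpa using (mem_filter.1 hφ).2 v
          rwa [Fintype.card_fin, G.card_neighborFinset_eq_degree, hreg v] at this
  have hr' : (0 : ℝ) < r := by exact_mod_cast hr
  rw [hS, div_eq_mul_inv, Real.rpow_mul (Nat.cast_nonneg _), Real.rpow_natCast,
    Real.le_rpow_inv_iff_of_pos (Nat.cast_nonneg _) (by positivity) hr', Real.rpow_natCast]
  exact_mod_cast hbound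

/-- For an `r`-regular graph `G` on `n` vertices and `q ≥ r`, the number of rainbow
`q`-colorings of the open neighborhood hypergraph of `G` is at most
`(q(q-1)⋯(q-r+1))^(n/r)`. -/
theorem stmt10 {V : Type*} [Fintype V] (G : SimpleGraph V) [DecidableRel G.Adj]
    (r : ℕ) (hr : 1 ≤ r) (hreg : G.IsRegularOfDegree r) (q : ℕ) (hq : r ≤ q) :
    ({φ : V → Fin q | ∀ v : V, Set.InjOn φ (G.neighborSet v)}.ncard : ℝ) ≤
      (q.descFactorial r : ℝ) ^ ((Fintype.card V : ℝ) / r) :=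
  stmt10_general G r hr hreg q
end

section
/- For a graph G with minimum degree at least one, the number of existence homomorphisms from G to H_ind equals the number of dominating sets of G, where H_ind has vertices {0,1}, an edge 01, and a loop at 1. -/
namespace SimpleGraph

variable {V : Type*} (G : SimpleGraph V)

/-- With `S = φ⁻¹(1)`, the left side says `φ` is an existence homomorphism to `H_ind`; a vertex
of `S` may take any neighbour as its witness, which is where isolated vertices are excluded. -/
theorem forall_exists_adj_or_iff_dominating (hG : ∀ v, ∃ w, G.Adj v w) (S : Set V) :
    (∀ v, ∃ w, G.Adj v w ∧ (v ∈ S ∨ w ∈ S)) ↔ ∀ v, ∃ u ∈ S, u = v ∨ G.Adj u v := by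
  refine forall_congr' fun v => ⟨?_, ?_⟩
  · rintro ⟨w, hvw, hv | hw⟩
    · exact ⟨v, hv, .inl rfl⟩
    · exact ⟨w, hw, .inr hvw.symm⟩
  · rintro ⟨u, hu, rfl | huv⟩
    · obtain ⟨w, hvw⟩ := hG u
      exact ⟨w, hvw, .inl hu⟩
    · exact ⟨u, huv.symm, .inr hu⟩

end SimpleGraph

theorem Finset.decide_mem_injective {α : Type*} [DecidableEq α] :
    Function.Injective fun (s : Finset α) (a : α) => decide (a ∈ s) := by
  intro s t h
  ext a
  simpa using congrFun h a

theorem stmt12_general {V : Type*} [Fintype V] (G : SimpleGraph V)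
    [DecidableRel G.Adj] (hδ : ∀ v : V, 0 < G.degree v) :
    {φ : V → Bool | ∀ v : V, ∃ w : V, G.Adj v w ∧ (φ v = true ∨ φ w = true)}.ncard =
      {S : Finset V | ∀ v : V, ∃ u ∈ S, u = v ∨ G.Adj u v}.ncard := by
  classical
  have hG : ∀ v, ∃ w, G.Adj v w := fun v => (G.degree_pos_iff_exists_adj v).mp (hδ v)
  rw [← Set.ncard_image_of_injective _ Finset.decide_mem_injective]
  congr 1
  ext φ
  simp only [Set.mem_ofPred_eq, Set.mem_image]
  constructor
  · intro hφ
    refine ⟨Finset.univ.filter (φ · = true), ?_, funext fun v => by simp⟩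
    simpa using (G.forall_exists_adj_or_iff_dominating hG {v | φ v = true}).mp hφ
  · rintro ⟨S, hS, rfl⟩
    simpa using (G.forall_exists_adj_or_iff_dominating hG S).mpr hS

/-- For a graph `G` with minimum degree at least one, the number of existence homomorphisms
from `G` to `H_ind` (vertices `{0,1}`, edge `01`, loop at `1`; encoded here with `Bool`,
where `1` is `true` and a pair is an edge iff at least one endpoint is `true`) equals the
number of dominating sets of `G`. -/
theorem stmt12 {V : Type*} [Fintype V] [DecidableEq V] (G : SimpleGraph V)
    [DecidableRel G.Adj] (hδ : ∀ v : V, 0 < G.degree v) :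
    {φ : V → Bool | ∀ v : V, ∃ w : V, G.Adj v w ∧ (φ v = true ∨ φ w = true)}.ncard =
      {S : Finset V | ∀ v : V, ∃ u ∈ S, u = v ∨ G.Adj u v}.ncard :=
  stmt12_general G hδ
end

section
/- For any graph G and integer q ≥ 1, the number of existence homomorphisms from G to the complete graph K_q equals the number of proper q-colorings of the closed neighborhood hypergraph 𝓝_c(G). -/
/-! A closed neighbourhood `N[v]` contains `v`, so it is not monochromatic exactly when some
`w ∈ N[v]` gets a colour different from that of `v`; as `v` itself cannot be that `w`, this says
that some neighbour of `v` is coloured differently, i.e. `φ` is an existence homomorphism into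
`K_q` at `v`. Hence the two sets of colourings coincide. -/

theorem Finset.exists_ne_pair_iff_exists_ne_of_mem {α β : Type*} {s : Finset α} (f : α → β)
    {a : α} (ha : a ∈ s) :
    (∃ x ∈ s, ∃ y ∈ s, f x ≠ f y) ↔ ∃ y ∈ s, f a ≠ f y := by
  constructor
  · rintro ⟨x, hx, y, hy, hxy⟩
    by_cases hax : f a = f x
    · exact ⟨y, hy, hax ▸ hxy⟩
    · exact ⟨x, hx, hax⟩
  · rintro ⟨y, hy, hay⟩
    exact ⟨a, ha, y, hy, hay⟩

theorem SimpleGraph.exists_mem_insert_neighborFinset_ne_iff {V β : Type*} [Fintype V] [DecidableEq V]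
    (G : SimpleGraph V) [DecidableRel G.Adj] (f : V → β) (v : V) :
    (∃ w ∈ insert v (G.neighborFinset v), f v ≠ f w) ↔ ∃ w, G.Adj v w ∧ f v ≠ f w := by
  simp only [Finset.exists_mem_insert, mem_neighborFinset, ne_eq, not_true_eq_false, false_or]

theorem stmt13_general {V : Type*} [Fintype V] [DecidableEq V] (G : SimpleGraph V)
    [DecidableRel G.Adj] (q : ℕ) :
    {φ : V → Fin q | ∀ v : V, ∃ w : V, G.Adj v w ∧ φ v ≠ φ w}.ncard =
      {φ : V → Fin q | ∀ v : V, ∃ u ∈ insert v (G.neighborFinset v),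
        ∃ w ∈ insert v (G.neighborFinset v), φ u ≠ φ w}.ncard := by
  congr 1
  ext φ
  refine forall_congr' fun v => ?_
  rw [Finset.exists_ne_pair_iff_exists_ne_of_mem φ (Finset.mem_insert_self v _),
    G.exists_mem_insert_neighborFinset_ne_iff]

/-- For any graph `G` and integer `q ≥ 1`, the number of existence homomorphisms from `G`
to the complete graph `K_q` equals the number of proper `q`-colorings of the closed
neighborhood hypergraph of `G`. -/
theorem stmt13 {V : Type*} [Fintype V] [DecidableEq V] (G : SimpleGraph V)
    [DecidableRel G.Adj] (q : ℕ) (hq : 1 ≤ q) :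
    {φ : V → Fin q | ∀ v : V, ∃ w : V, G.Adj v w ∧ φ v ≠ φ w}.ncard =
      {φ : V → Fin q | ∀ v : V, ∃ u ∈ insert v (G.neighborFinset v),
        ∃ w ∈ insert v (G.neighborFinset v), φ u ≠ φ w}.ncard :=
  stmt13_general G q
end

section
/- For any integer n ≥ 2, the number of maps φ: V(P_n) → {a,b} such that every vertex has a neighbor of the same color and the left endpoint is colored a equals F_{n-2}, the Fibonacci number (with F_0 = F_1 = 1). -/
/-- Fibonacci numbers with `F 0 = F 1 = 1`. -/
def F : ℕ → ℕ
  | 0 => 1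
  | 1 => 1
  | (n + 2) => F (n + 1) + F n

/-!
In a colouring of a path in which every vertex has a neighbour of its own colour, the last two
vertices have the same colour. Deleting the last vertex, or the last two vertices, of such a
colouring of `P (n + 4)` leaves such a colouring of `P (n + 3)`, respectively `P (n + 2)`,
according as the third-to-last vertex has the colour of the last two or not; conversely every
colouring of the shorter paths extends in exactly one way (repeat the last colour once, or append
the other colour twice). So the numbers of these colourings with a fixed colour at the left end
satisfy the Fibonacci recursion, and there is exactly one such colouring of `P 2` and of `P 3`.
-/

open SimpleGraph Finset

section

variable {V α : Type*}

def HasSameColorNeighbor (G : SimpleGraph V) (φ : V → α) (v : V) : Prop :=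
  ∃ w, G.Adj v w ∧ φ v = φ w

def HasSameColorNeighbors (G : SimpleGraph V) (φ : V → α) : Prop :=
  ∀ v, HasSameColorNeighbor G φ v

instance [Fintype V] [DecidableEq α] (G : SimpleGraph V) [DecidableRel G.Adj] :
    DecidablePred (HasSameColorNeighbors (α := α) G) := fun φ => by
  unfold HasSameColorNeighbors HasSameColorNeighbor
  infer_instance

end

instance (n : ℕ) : DecidableRel (pathGraph n).Adj :=
  fun _ _ => decidable_of_iff _ pathGraph_adj.symm

section PathGraph

variable {α : Type*} {n : ℕ}

theorem pathGraph_adj_castSucc {u v : Fin n} :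
    (pathGraph (n + 1)).Adj u.castSucc v.castSucc ↔ (pathGraph n).Adj u v := by
  simp [pathGraph_adj]

theorem pathGraph_adj_castSucc_last :
    (pathGraph (n + 2)).Adj (Fin.last n).castSucc (Fin.last (n + 1)) := by
  simp [pathGraph_adj]

theorem hasSameColorNeighbor_castSucc_of_init {φ : Fin (n + 1) → α} {u : Fin n}
    (h : HasSameColorNeighbor (pathGraph n) (Fin.init φ) u) :
    HasSameColorNeighbor (pathGraph (n + 1)) φ u.castSucc :=
  let ⟨w, hadj, heq⟩ := h
  ⟨w.castSucc, pathGraph_adj_castSucc.2 hadj, heq⟩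

theorem hasSameColorNeighbor_init_of_castSucc {φ : Fin (n + 2) → α} {u : Fin (n + 1)}
    (hu : u ≠ Fin.last n) (h : HasSameColorNeighbor (pathGraph (n + 2)) φ u.castSucc) :
    HasSameColorNeighbor (pathGraph (n + 1)) (Fin.init φ) u := by
  obtain ⟨w, hadj, heq⟩ := h
  have hw : w ≠ Fin.last (n + 1) := by
    rintro rfl
    have := Fin.val_lt_last hu
    simp only [pathGraph_adj, Fin.val_castSucc, Fin.val_last] at hadj this
    omega
  obtain ⟨w, rfl⟩ := Fin.exists_castSucc_eq.2 hw
  exact ⟨w, pathGraph_adj_castSucc.1 hadj, heq⟩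

theorem hasSameColorNeighbors_init {φ : Fin (n + 3) → α}
    (hφ : ∀ u : Fin (n + 2), HasSameColorNeighbor (pathGraph (n + 3)) φ u.castSucc)
    (h : Fin.init φ (Fin.last n).castSucc = Fin.init φ (Fin.last (n + 1))) :
    HasSameColorNeighbors (pathGraph (n + 2)) (Fin.init φ) :=
  Fin.lastCases ⟨(Fin.last n).castSucc, pathGraph_adj_castSucc_last.symm, h.symm⟩
    (fun u => hasSameColorNeighbor_init_of_castSucc (Fin.castSucc_ne_last u) (hφ _))

namespace HasSameColorNeighbors

theorem apply_last_eq {φ : Fin (n + 2) → α} (hφ : HasSameColorNeighbors (pathGraph (n + 2)) φ) :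
    φ (Fin.last (n + 1)) = φ (Fin.last n).castSucc := by
  obtain ⟨w, hadj, heq⟩ := hφ (Fin.last (n + 1))
  rw [heq]
  congr
  rw [pathGraph_adj] at hadj
  ext
  simp only [Fin.val_last, Fin.val_castSucc] at hadj ⊢
  omega

theorem snoc_self_last {ψ : Fin (n + 1) → α} (hψ : HasSameColorNeighbors (pathGraph (n + 1)) ψ) :
    HasSameColorNeighbors (pathGraph (n + 2)) (Fin.snoc ψ (ψ (Fin.last n))) := by
  refine Fin.lastCases ?_ (fun u => ?_)
  · exact ⟨(Fin.last n).castSucc, pathGraph_adj_castSucc_last.symm, by simp⟩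
  · exact hasSameColorNeighbor_castSucc_of_init (by simpa using hψ u)

theorem snoc_snoc {χ : Fin n → α} (hχ : HasSameColorNeighbors (pathGraph n) χ) (c : α) :
    HasSameColorNeighbors (pathGraph (n + 2)) (Fin.snoc (Fin.snoc χ c) c) := by
  refine Fin.lastCases ?_ (Fin.lastCases ?_ (fun u => ?_))
  · exact ⟨(Fin.last n).castSucc, pathGraph_adj_castSucc_last.symm, by simp⟩
  · exact ⟨Fin.last (n + 1), pathGraph_adj_castSucc_last, by simp⟩
  · exact hasSameColorNeighbor_castSucc_of_init
      (by simpa using hasSameColorNeighbor_castSucc_of_init (by simpa using hχ u))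

theorem init {φ : Fin (n + 3) → α} (hφ : HasSameColorNeighbors (pathGraph (n + 3)) φ)
    (h : Fin.init φ (Fin.last n).castSucc = Fin.init φ (Fin.last (n + 1))) :
    HasSameColorNeighbors (pathGraph (n + 2)) (Fin.init φ) :=
  hasSameColorNeighbors_init (fun u => hφ u.castSucc) h

theorem init_init {φ : Fin (n + 4) → α} (hφ : HasSameColorNeighbors (pathGraph (n + 4)) φ)
    (hne : Fin.init φ (Fin.last (n + 1)).castSucc ≠ Fin.init φ (Fin.last (n + 2))) :
    HasSameColorNeighbors (pathGraph (n + 2)) (Fin.init (Fin.init φ)) := by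
  refine hasSameColorNeighbors_init
    (fun u => hasSameColorNeighbor_init_of_castSucc (Fin.castSucc_ne_last u) (hφ _)) ?_
  obtain ⟨w, hadj, heq⟩ := hφ (Fin.last (n + 1)).castSucc.castSucc
  simp only [pathGraph_adj, Fin.val_castSucc, Fin.val_last] at hadj
  rcases hadj with hw | hw
  · exact absurd (heq.trans (congrArg φ (Fin.ext (by simp [← hw])))) hne
  · exact (heq.trans (congrArg φ (Fin.ext (by simp; omega)))).symm

end HasSameColorNeighbors

end PathGraph

def pathColorings (n : ℕ) (b : Bool) : Finset (Fin (n + 2) → Bool) :=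
  {φ | HasSameColorNeighbors (pathGraph (n + 2)) φ ∧ φ 0 = b}

theorem mem_pathColorings {n : ℕ} {b : Bool} {φ : Fin (n + 2) → Bool} :
    φ ∈ pathColorings n b ↔ HasSameColorNeighbors (pathGraph (n + 2)) φ ∧ φ 0 = b := by
  simp [pathColorings]

theorem card_pathColorings_filter_eq (n : ℕ) (b : Bool) :
    #{φ ∈ pathColorings (n + 2) b |
        Fin.init φ (Fin.last (n + 1)).castSucc = Fin.init φ (Fin.last (n + 2))} =
      #(pathColorings (n + 1) b) := by
  refine card_nbij' Fin.init (fun ψ => Fin.snoc ψ (ψ (Fin.last _))) ?_ ?_ ?_ ?_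
  · intro φ hφ
    simp only [coe_filter, mem_pathColorings, Set.mem_ofPred_eq, mem_coe] at hφ ⊢
    exact ⟨hφ.1.1.init hφ.2, hφ.1.2⟩
  · intro ψ hψ
    simp only [coe_filter, mem_pathColorings, Set.mem_ofPred_eq, mem_coe] at hψ ⊢
    refine ⟨⟨hψ.1.snoc_self_last, by simpa using hψ.2⟩, ?_⟩
    simpa [Fin.init_snoc] using hψ.1.apply_last_eq.symm
  · intro φ hφ
    simp only [coe_filter, mem_pathColorings, Set.mem_ofPred_eq] at hφ
    calc Fin.snoc (Fin.init φ) (Fin.init φ (Fin.last _))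
        = Fin.snoc (Fin.init φ) (φ (Fin.last _)) := by rw [hφ.1.1.apply_last_eq]; rfl
      _ = φ := Fin.snoc_init_self φ
  · exact fun ψ _ => Fin.init_snoc _ _

theorem card_pathColorings_filter_ne (n : ℕ) (b : Bool) :
    #{φ ∈ pathColorings (n + 2) b |
        Fin.init φ (Fin.last (n + 1)).castSucc ≠ Fin.init φ (Fin.last (n + 2))} =
      #(pathColorings n b) := by
  refine card_nbij' (Fin.init ∘ Fin.init)
    (fun χ => Fin.snoc (Fin.snoc χ !χ (Fin.last _)) !χ (Fin.last _)) ?_ ?_ ?_ ?_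
  · intro φ hφ
    simp only [coe_filter, mem_pathColorings, Set.mem_ofPred_eq, mem_coe] at hφ ⊢
    exact ⟨hφ.1.1.init_init hφ.2, hφ.1.2⟩
  · intro χ hχ
    simp only [coe_filter, mem_pathColorings, Set.mem_ofPred_eq, mem_coe] at hχ ⊢
    refine ⟨⟨hχ.1.snoc_snoc _, by simpa using hχ.2⟩, ?_⟩
    simp [Fin.init_snoc]
  · intro φ hφ
    simp only [coe_filter, mem_pathColorings, Set.mem_ofPred_eq] at hφ
    have hpen : Fin.init φ (Fin.last _) = !Fin.init (Fin.init φ) (Fin.last _) :=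
      Bool.eq_not.2 hφ.2.symm
    calc Fin.snoc (Fin.snoc (Fin.init (Fin.init φ)) (!Fin.init (Fin.init φ) (Fin.last _)))
          (!Fin.init (Fin.init φ) (Fin.last _))
        = Fin.snoc (Fin.snoc (Fin.init (Fin.init φ)) (Fin.init φ (Fin.last _)))
            (φ (Fin.last _)) := by rw [hφ.1.1.apply_last_eq, ← hpen]; rfl
      _ = φ := by rw [Fin.snoc_init_self, Fin.snoc_init_self]
  · exact fun χ _ => by simp [Fin.init_snoc]

theorem card_pathColorings_add_two (n : ℕ) (b : Bool) :
    #(pathColorings (n + 2) b) = #(pathColorings (n + 1) b) + #(pathColorings n b) := by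
  rw [← card_pathColorings_filter_eq n b, ← card_pathColorings_filter_ne n b,
    card_filter_add_card_filter_not]

theorem card_pathColorings : ∀ (n : ℕ) (b : Bool), #(pathColorings n b) = F n
  | 0, b | 1, b => by cases b <;> decide
  | n + 2, b => by
    rw [card_pathColorings_add_two, card_pathColorings n, card_pathColorings (n + 1), F]

/-- For `n ≥ 2`, the number of two-colorings of the path `P_n` in which every vertex has a
neighbor of the same color and the left endpoint gets a specified color is `F (n-2)`. -/
theorem stmt14 (n : ℕ) (hn : 2 ≤ n) :
    {φ : Fin n → Bool | (∀ v : Fin n, ∃ w : Fin n,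
        (SimpleGraph.pathGraph n).Adj v w ∧ φ v = φ w) ∧
      φ ⟨0, by omega⟩ = true}.ncard = F (n - 2) := by
  obtain ⟨n, rfl⟩ := Nat.exists_eq_add_of_le' hn
  rw [Nat.add_sub_cancel, ← card_pathColorings n true, ← Set.ncard_coe_finset]
  congr 1
  ext φ
  simp only [Set.mem_ofPred_eq, mem_coe, mem_pathColorings]
  rfl
end

section
/- For the counts c_n of 2-colorings of the cycle C_n (n ≥ 3) in which every vertex has a neighbor of the same color, the sequence c_n^(1/n) attains its maximum at n = 6. -/
/-!
Recording the colours of consecutive vertices as pairs `(φ i, φ (i + 1))` turns good colourings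
of `C_n` into closed walks of length `n` in a digraph on `Bool × Bool`, so `c_n = tr (T ^ n)`
for its adjacency matrix `T`. Since `(T² - T - 1)(T² - T + 1) = 0`, the Fibonacci defect
`d_n = t_(n+2) - t_(n+1) - t_n` of `t_n = tr (T ^ n)` obeys `d_(n+2) = d_(n+1) - d_n`; it is
therefore `6`-periodic, and at most `4`. As `ρ = c_6 ^ (1/6) = 20 ^ (1/6)` exceeds the golden
ratio, `ρ² ≥ ρ + 1`, so `t_n + 4 ≤ ρ ^ n` propagates from `n = 8, 9` to all larger `n`; the
cases `3 ≤ n ≤ 7` are checked directly.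
-/

/-- `c n` is the number of two-colorings of the cycle `C_n` in which every vertex has a
neighbor of the same color. -/
noncomputable def c (n : ℕ) : ℕ :=
  {φ : Fin n → Bool | ∀ v, ∃ w, (SimpleGraph.cycleGraph n).Adj v w ∧ φ v = φ w}.ncard

open Matrix Finset

theorem Fin.cons_add_one_eq_snoc {n : ℕ} {α : Type*} (a : α) (g : Fin n → α)
    (i : Fin (n + 1)) :
    Fin.cons (α := fun _ ↦ α) a g (i + 1) = Fin.snoc (α := fun _ ↦ α) g a i := by
  induction i using Fin.lastCases with
  | last => rw [Fin.last_add_one, Fin.cons_zero, Fin.snoc_last]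
  | cast j => rw [Fin.coeSucc_eq_succ, Fin.cons_succ, Fin.snoc_castSucc]

theorem Fin.sum_fun_succ {ι M : Type*} [Fintype ι] [AddCommMonoid M] {n : ℕ}
    (F : (Fin (n + 1) → ι) → M) :
    ∑ f, F f = ∑ a, ∑ g : Fin n → ι, F (Fin.cons a g) := by
  rw [← (Fin.consEquiv fun _ ↦ ι).sum_comp, Fintype.sum_prod_type]
  rfl

section TransferMatrix

variable {ι R : Type*} [Fintype ι] [DecidableEq ι] [CommSemiring R]

theorem Matrix.pow_succ_apply_eq_sum_prod (A : Matrix ι ι R) (n : ℕ) (a b : ι) :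
    (A ^ (n + 1)) a b =
      ∑ g : Fin n → ι, ∏ i,
        A (Fin.cons (α := fun _ ↦ ι) a g i) (Fin.snoc (α := fun _ ↦ ι) g b i) := by
  induction n generalizing a with
  | zero => simp [Fin.snoc_zero]
  | succ n ih =>
    rw [pow_succ', mul_apply, Fin.sum_fun_succ]
    refine Fintype.sum_congr _ _ fun j ↦ ?_
    rw [ih, mul_sum]
    refine Fintype.sum_congr _ _ fun g ↦ ?_
    rw [← Fin.cons_snoc_eq_snoc_cons, Fin.prod_univ_succ (n := n + 1)]
    simp only [Fin.cons_zero, Fin.cons_succ]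

theorem Matrix.trace_pow_succ_eq_sum_prod (A : Matrix ι ι R) (n : ℕ) :
    trace (A ^ (n + 1)) = ∑ f : Fin (n + 1) → ι, ∏ i, A (f i) (f (i + 1)) := by
  simp only [trace, diag, pow_succ_apply_eq_sum_prod, Fin.sum_fun_succ, Fin.cons_add_one_eq_snoc]

theorem Matrix.card_cyclic_chains_eq_trace (r : ι → ι → Prop) [DecidableRel r] (n : ℕ) :
    Fintype.card {f : Fin (n + 1) → ι // ∀ i, r (f i) (f (i + 1))} =
      trace (of (fun a b ↦ if r a b then 1 else 0) ^ (n + 1) : Matrix ι ι ℕ) := by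
  simp only [trace_pow_succ_eq_sum_prod, of_apply, Fintype.prod_boole, Fintype.card_subtype,
    card_filter]
  congr!

end TransferMatrix

theorem SimpleGraph.cycleGraph_adj_iff {n : ℕ} {v w : Fin (n + 2)} :
    (cycleGraph (n + 2)).Adj v w ↔ w = v - 1 ∨ w = v + 1 := by
  rw [← mem_neighborSet, cycleGraph_neighborSet, Set.mem_insert_iff, Set.mem_singleton_iff]

theorem cycleGraph_coloring_iff {n : ℕ} (φ : Fin (n + 2) → Bool) :
    (∀ v, ∃ w, (SimpleGraph.cycleGraph (n + 2)).Adj v w ∧ φ v = φ w) ↔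
      ∀ i, φ i = φ (i + 1) ∨ φ (i + 1) = φ (i + 1 + 1) := by
  simp only [SimpleGraph.cycleGraph_adj_iff, exists_eq_or_imp, exists_eq_left]
  constructor
  · intro h i
    simpa [eq_comm] using h (i + 1)
  · intro h v
    simpa [eq_comm] using h (v - 1)

/-- `PairStep (φ i, φ (i + 1)) (φ (i + 1), φ (i + 2))` says that vertex `i + 1` has a neighbour
of its own colour. -/
def PairStep (p q : Bool × Bool) : Prop := q.1 = p.2 ∧ (p.1 = p.2 ∨ p.2 = q.2)

instance : DecidableRel PairStep := fun _ _ ↦ inferInstanceAs (Decidable (_ ∧ _))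

def transferMatrix : Matrix (Bool × Bool) (Bool × Bool) ℕ :=
  of fun p q ↦ if PairStep p q then 1 else 0

def transferTrace (n : ℕ) : ℕ := trace (transferMatrix ^ n)

def cycleColoringEquivPairChains (n : ℕ) [NeZero n] :
    {φ : Fin n → Bool // ∀ i, φ i = φ (i + 1) ∨ φ (i + 1) = φ (i + 1 + 1)} ≃
      {f : Fin n → Bool × Bool // ∀ i, PairStep (f i) (f (i + 1))} where
  toFun φ := ⟨fun i ↦ (φ.1 i, φ.1 (i + 1)), fun i ↦ ⟨rfl, φ.2 i⟩⟩
  invFun f := ⟨fun i ↦ (f.1 i).1, fun i ↦ by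
    obtain ⟨h₁, h₂⟩ := f.2 i
    simp only [h₁, (f.2 (i + 1)).1]
    exact h₂⟩
  left_inv φ := rfl
  right_inv f := Subtype.ext <| funext fun i ↦ Prod.ext rfl (f.2 i).1

theorem c_eq_transferTrace (n : ℕ) : c (n + 2) = transferTrace (n + 2) := by
  rw [c, ← Nat.card_coe_set_eq, Set.coe_ofPred, Nat.card_congr
    ((Equiv.subtypeEquivRight cycleGraph_coloring_iff).trans (cycleColoringEquivPairChains _)),
    Nat.card_eq_fintype_card, card_cyclic_chains_eq_trace]
  rfl

theorem c_six : c 6 = 20 := (c_eq_transferTrace 4).trans (by decide)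

theorem transferMatrix_pow_four :
    transferMatrix ^ 4 + transferMatrix ^ 2 = transferMatrix ^ 3 + transferMatrix ^ 3 + 1 := by
  decide

theorem transferTrace_add_four (n : ℕ) :
    transferTrace (n + 4) + transferTrace (n + 2) =
      transferTrace (n + 3) + transferTrace (n + 3) + transferTrace n := by
  have h := congrArg (fun M ↦ trace (transferMatrix ^ n * M)) transferMatrix_pow_four
  simpa only [transferTrace, mul_add, mul_one, ← pow_add, trace_add, add_comm n] using h

theorem Function.periodic_six_of_add_two_eq_sub {G : Type*} [AddCommGroup G] {x : ℕ → G}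
    (hx : ∀ n, x (n + 2) = x (n + 1) - x n) : Function.Periodic x 6 := by
  have h3 (n : ℕ) : x (n + 3) = -x n := by
    rw [hx (n + 1), hx n]
    abel
  intro n
  rw [h3 (n + 3), h3 n, neg_neg]

def fibDefect (n : ℕ) : ℤ := transferTrace (n + 2) - transferTrace (n + 1) - transferTrace n

theorem fibDefect_add_two (n : ℕ) : fibDefect (n + 2) = fibDefect (n + 1) - fibDefect n := by
  have h : (transferTrace (n + 4) : ℤ) + transferTrace (n + 2) =
      transferTrace (n + 3) + transferTrace (n + 3) + transferTrace n := by
    exact_mod_cast transferTrace_add_four n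
  simp only [fibDefect]
  linear_combination h

theorem fibDefect_le_four (n : ℕ) : fibDefect n ≤ 4 := by
  rw [← (Function.periodic_six_of_add_two_eq_sub fibDefect_add_two).map_mod_nat]
  have h : ∀ k < 6, fibDefect k ≤ 4 := by decide
  exact h _ (Nat.mod_lt _ (by norm_num))

theorem transferTrace_add_two_le (n : ℕ) :
    (transferTrace (n + 2) : ℝ) ≤ transferTrace (n + 1) + transferTrace n + 4 := by
  have h := fibDefect_le_four n
  rw [fibDefect] at h
  exact_mod_cast
    (by linarith : (transferTrace (n + 2) : ℤ) ≤ transferTrace (n + 1) + transferTrace n + 4)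

-- `1.647 < 20 ^ (1 / 6) ≈ 1.64755`, and `1.647` already exceeds the golden ratio.
theorem transferTrace_add_four_le_pow {ρ : ℝ} (hρ : 1.647 ≤ ρ) (n : ℕ) (hn : 8 ≤ n) :
    (transferTrace n : ℝ) + 4 ≤ ρ ^ n := by
  obtain ⟨k, rfl⟩ := Nat.exists_eq_add_of_le' hn
  clear hn
  have hpow (m : ℕ) := pow_le_pow_left₀ (by norm_num) hρ m
  induction k using Nat.twoStepInduction with
  | zero =>
    have h8 : transferTrace 8 = 46 := by decide
    have := hpow 8
    norm_num [h8] at this ⊢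
    linarith
  | one =>
    have h9 : transferTrace 9 = 74 := by decide
    have := hpow 9
    norm_num [h9] at this ⊢
    linarith
  | more k ih₀ ih₁ =>
    have hfib : ρ ^ (k + 9) + ρ ^ (k + 8) ≤ ρ ^ (k + 10) := by
      have hgolden : ρ + 1 ≤ ρ ^ 2 := by nlinarith
      calc ρ ^ (k + 9) + ρ ^ (k + 8) = ρ ^ (k + 8) * (ρ + 1) := by ring
        _ ≤ ρ ^ (k + 8) * ρ ^ 2 := by gcongr
        _ = ρ ^ (k + 10) := by ring
    linarith [transferTrace_add_two_le (k + 8)]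

theorem transferTrace_le_pow {ρ : ℝ} (hρ : 1.647 ≤ ρ) (hρ6 : 20 ≤ ρ ^ 6) (n : ℕ)
    (hn : 3 ≤ n) : (transferTrace n : ℝ) ≤ ρ ^ n := by
  rcases lt_or_ge n 8 with hlt | hge
  · obtain ⟨h3, h4, h5, h6, h7⟩ : transferTrace 3 = 2 ∧ transferTrace 4 = 6 ∧
        transferTrace 5 = 12 ∧ transferTrace 6 = 20 ∧ transferTrace 7 = 30 := by decide
    have hpow := pow_le_pow_left₀ (by norm_num) hρ n
    interval_cases n <;> norm_num [h3, h4, h5, h6, h7] at hpow ⊢ <;> linarith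
  · linarith [transferTrace_add_four_le_pow hρ n hge]

/-- The sequence `c_n^(1/n)` (for `n ≥ 3`) attains its maximum at `n = 6`. -/
theorem stmt18 (n : ℕ) (hn : 3 ≤ n) :
    (c n : ℝ) ^ ((1 : ℝ) / n) ≤ (c 6 : ℝ) ^ ((1 : ℝ) / 6) := by
  set ρ := (c 6 : ℝ) ^ ((1 : ℝ) / 6)
  have hρ0 : 0 ≤ ρ := by positivity
  have hρ6 : ρ ^ 6 = 20 := by
    rw [← Real.rpow_natCast, ← Real.rpow_mul (Nat.cast_nonneg _), c_six]
    norm_num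
  have hρ : 1.647 ≤ ρ := by
    by_contra! h
    have := pow_lt_pow_left₀ h hρ0 (by norm_num : 6 ≠ 0)
    norm_num [hρ6] at this
  obtain ⟨m, rfl⟩ : ∃ m, n = m + 2 := ⟨n - 2, by omega⟩
  have hc : (c (m + 2) : ℝ) ≤ ρ ^ (m + 2) := by
    rw [c_eq_transferTrace]
    exact transferTrace_le_pow hρ hρ6.ge _ hn
  calc (c (m + 2) : ℝ) ^ ((1 : ℝ) / ↑(m + 2)) ≤ (ρ ^ (m + 2)) ^ ((1 : ℝ) / ↑(m + 2)) :=
        Real.rpow_le_rpow (by positivity) hc (by positivity)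
    _ = ρ := by rw [one_div, Real.pow_rpow_inv_natCast hρ0 (by omega)]
end
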